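/- arXiv:2112.08580 — 5 statements merged into one kernel-verified Lean document; each statement's English description precedes it below -/
import Mathlib

section
/- Suppose in addition that γ is a real constant, that J > 0 on I × Ω, and that p : I × Ω → (0,∞) is smooth and satisfies the Lagrangian pressure equation ∂_t p + γ p div_A v = 0 on I × Ω. Then ∂_t (p J^γ) = 0 on I × Ω; equivalently, for all t, t₀ ∈ I and x ∈ Ω one has p(t,x) J(t,x)^γ = p(t₀,x) J(t₀,x)^γ, i.e. p(t,·) = p(t₀,·) J(t₀,·)^γ J(t,·)^{-γ}. -/
noncomputable section

open Matrix Set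

/-- Points of ℝ³ as functions `Fin 3 → ℝ`. -/
abbrev V3 : Type := Fin 3 → ℝ

/-- Space-time points `(t, x) ∈ ℝ × ℝ³`. -/
abbrev Pt : Type := ℝ × V3

/-- Time derivative `∂ₜ F` of a scalar function on space-time. -/
def dt (F : Pt → ℝ) (z : Pt) : ℝ := fderiv ℝ F z (1, 0)

/-- Spatial partial derivative `∂ⱼ F` of a scalar function on space-time. -/
def dx (j : Fin 3) (F : Pt → ℝ) (z : Pt) : ℝ := fderiv ℝ F z (0, Pi.single j 1)

/-- The spatial Jacobian matrix `(∇η)_{ij} = ∂ηᵢ/∂xⱼ`. -/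
def jac (η : Pt → V3) (z : Pt) : Matrix (Fin 3) (Fin 3) ℝ :=
  Matrix.of fun i j => dx j (fun w => η w i) z

/-- The Jacobian determinant `J = det ∇η`. -/
def Jdet (η : Pt → V3) (z : Pt) : ℝ := (jac η z).det

/-- The matrix `A = (∇η)⁻ᵀ`. -/
def Amat (η : Pt → V3) (z : Pt) : Matrix (Fin 3) (Fin 3) ℝ := ((jac η z)⁻¹)ᵀ

/-- The Lagrangian velocity `v = ∂ₜ η`. -/
def vel (η : Pt → V3) (z : Pt) : V3 := fun i => dt (fun w => η w i) z

/-- `div_A w = Σᵢⱼ Aᵢⱼ ∂ⱼ wᵢ`. -/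
def divA (η : Pt → V3) (w : Pt → V3) (z : Pt) : ℝ :=
  ∑ i, ∑ j, Amat η z i j * dx j (fun y => w y i) z

/-- `(w·∇_A) f = Σₖⱼ wₖ Aₖⱼ ∂ⱼ f`. -/
def advA (η : Pt → V3) (w : Pt → V3) (f : Pt → ℝ) (z : Pt) : ℝ :=
  ∑ k, ∑ j, w z k * Amat η z k j * dx j f z

/-- `N = ∂₁η × ∂₂η`, the cross product of the first two columns of `∇η`. -/
def Nvec (η : Pt → V3) (z : Pt) : V3 :=
  crossProduct (fun i => jac η z i 0) (fun i => jac η z i 1)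
lemma dt_add' {f g : Pt → ℝ} {z : Pt} (hf : DifferentiableAt ℝ f z)
    (hg : DifferentiableAt ℝ g z) :
    dt (fun w => f w + g w) z = dt f z + dt g z := by
  simp [dt, fderiv_fun_add hf hg]

lemma dt_sub' {f g : Pt → ℝ} {z : Pt} (hf : DifferentiableAt ℝ f z)
    (hg : DifferentiableAt ℝ g z) :
    dt (fun w => f w - g w) z = dt f z - dt g z := by
  simp [dt, fderiv_fun_sub hf hg]

lemma dt_mul' {f g : Pt → ℝ} {z : Pt} (hf : DifferentiableAt ℝ f z)
    (hg : DifferentiableAt ℝ g z) :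
    dt (fun w => f w * g w) z = dt f z * g z + f z * dt g z := by
  simp only [dt, fderiv_fun_mul hf hg, ContinuousLinearMap.add_apply,
    ContinuousLinearMap.smul_apply, smul_eq_mul]
  ring

lemma dt_mul3 {f g h : Pt → ℝ} {z : Pt} (hf : DifferentiableAt ℝ f z)
    (hg : DifferentiableAt ℝ g z) (hh : DifferentiableAt ℝ h z) :
    dt (fun w => f w * g w * h w) z
      = dt f z * g z * h z + f z * dt g z * h z + f z * g z * dt h z := by
  rw [dt_mul' (f := fun w => f w * g w) (hf.mul hg) hh, dt_mul' hf hg]; ring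

lemma contDiffOn_fderiv_apply {S : Set Pt} (hS : IsOpen S) {f : Pt → ℝ}
    (hf : ContDiffOn ℝ (⊤ : ℕ∞) f S) (u : Pt) :
    ContDiffOn ℝ 1 (fun z => fderiv ℝ f z u) S :=
  ((hf.of_le (WithTop.coe_le_coe.mpr le_top : (2:WithTop ℕ∞) ≤ ((⊤ : ℕ∞) : WithTop ℕ∞))).fderiv_of_isOpen hS (m := 1) (by norm_num)).clm_apply contDiffOn_const

lemma fderiv_swap {S : Set Pt} (hS : IsOpen S) {f : Pt → ℝ} (hf : ContDiffOn ℝ (⊤ : ℕ∞) f S)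
    {z : Pt} (hz : z ∈ S) (u v : Pt) :
    fderiv ℝ (fun w => fderiv ℝ f w u) z v = fderiv ℝ (fun w => fderiv ℝ f w v) z u := by
  have hat : ContDiffAt ℝ 2 f z := (hf.contDiffAt (hS.mem_nhds hz)).of_le (WithTop.coe_le_coe.mpr le_top)
  have hd : DifferentiableAt ℝ (fderiv ℝ f) z :=
    (hat.fderiv_right (m := 1) (by norm_num)).differentiableAt one_ne_zero
  have key : ∀ u v : Pt, fderiv ℝ (fun w => fderiv ℝ f w u) z v
      = fderiv ℝ (fderiv ℝ f) z v u := by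
    intro u v
    have h1 : HasFDerivAt (fun w => (ContinuousLinearMap.apply ℝ ℝ u) (fderiv ℝ f w))
        ((ContinuousLinearMap.apply ℝ ℝ u).comp (fderiv ℝ (fderiv ℝ f) z)) z :=
      (ContinuousLinearMap.apply ℝ ℝ u).hasFDerivAt.comp z hd.hasFDerivAt
    have h2 : fderiv ℝ (fun w => fderiv ℝ f w u) z
        = (ContinuousLinearMap.apply ℝ ℝ u).comp (fderiv ℝ (fderiv ℝ f) z) := h1.fderiv
    rw [h2]; rfl
  rw [key u v, key v u]
  exact (hat.isSymmSndFDerivAt (by simp)) v u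
/-- If `∂ₜ p + γ p div_A v = 0` with `J > 0`, then `∂ₜ (p Jᵞ) = 0` on `I × Ω`;
equivalently `p(t,x) J(t,x)ᵞ = p(t₀,x) J(t₀,x)ᵞ` for all `t, t₀ ∈ I`, `x ∈ Ω`. -/
theorem pressure_jacobian_conservation
    (I : Set ℝ) (Ω : Set V3) (hI : IsOpen I) (hIc : I.OrdConnected) (hΩ : IsOpen Ω)
    (η : Pt → V3) (hη : ContDiffOn ℝ (⊤ : ℕ∞) η (I ×ˢ Ω))
    (hinv : ∀ z ∈ I ×ˢ Ω, IsUnit (jac η z).det)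
    (γ : ℝ)
    (hJpos : ∀ z ∈ I ×ˢ Ω, 0 < Jdet η z)
    (p : Pt → ℝ) (hp : ContDiffOn ℝ (⊤ : ℕ∞) p (I ×ˢ Ω))
    (hppos : ∀ z ∈ I ×ˢ Ω, 0 < p z)
    (hpeq : ∀ z ∈ I ×ˢ Ω, dt p z + γ * p z * divA η (vel η) z = 0) :
    (∀ z ∈ I ×ˢ Ω, dt (fun w => p w * Jdet η w ^ γ) z = 0) ∧
    ∀ t ∈ I, ∀ t₀ ∈ I, ∀ x ∈ Ω,
      p (t, x) * Jdet η (t, x) ^ γ = p (t₀, x) * Jdet η (t₀, x) ^ γ := by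
  classical
  set S := I ×ˢ Ω with hSdef
  have hS : IsOpen S := hI.prod hΩ
  have hηi : ∀ i, ContDiffOn ℝ (⊤ : ℕ∞) (fun w => η w i) S := fun i => contDiffOn_pi.1 hη i
  have hmc : ∀ i j, ContDiffOn ℝ 1 (fun w => jac η w i j) S := fun i j =>
    contDiffOn_fderiv_apply hS (hηi i) (0, Pi.single j 1)
  have hdm : ∀ z ∈ S, ∀ i j, DifferentiableAt ℝ (fun w => jac η w i j) z := fun z hz i j =>
    ((hmc i j).contDiffAt (hS.mem_nhds hz)).differentiableAt one_ne_zero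
  have hdp : ∀ z ∈ S, DifferentiableAt ℝ p z := fun z hz =>
    (hp.contDiffAt (hS.mem_nhds hz)).differentiableAt (by simp)
  have hJfun : (fun w => Jdet η w) = fun w =>
      jac η w 0 0 * jac η w 1 1 * jac η w 2 2 - jac η w 0 0 * jac η w 1 2 * jac η w 2 1
      - jac η w 0 1 * jac η w 1 0 * jac η w 2 2 + jac η w 0 1 * jac η w 1 2 * jac η w 2 0
      + jac η w 0 2 * jac η w 1 0 * jac η w 2 1 - jac η w 0 2 * jac η w 1 1 * jac η w 2 0 := by
    funext w; exact Matrix.det_fin_three (jac η w)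
  have hdJ : ∀ z ∈ S, DifferentiableAt ℝ (fun w => Jdet η w) z := by
    intro z hz
    have hd := hdm z hz
    rw [hJfun]
    exact (((((((hd 0 0).mul (hd 1 1)).mul (hd 2 2)).sub
      (((hd 0 0).mul (hd 1 2)).mul (hd 2 1))).sub
      (((hd 0 1).mul (hd 1 0)).mul (hd 2 2))).add
      (((hd 0 1).mul (hd 1 2)).mul (hd 2 0))).add
      (((hd 0 2).mul (hd 1 0)).mul (hd 2 1))).sub
      (((hd 0 2).mul (hd 1 1)).mul (hd 2 0))
  have dtm : ∀ z ∈ S, ∀ i j, dt (fun w => jac η w i j) z = dx j (fun w => vel η w i) z :=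
    fun z hz i j => fderiv_swap hS (hηi i) hz (0, Pi.single j 1) (1, 0)
  have key1 : ∀ z ∈ S, dt (fun w => Jdet η w) z = Jdet η z * divA η (vel η) z := by
    intro z hz
    have hd := hdm z hz
    have hdet : Jdet η z ≠ 0 := (hJpos z hz).ne'
    have hAmat : ∀ i j, Amat η z i j = (Jdet η z)⁻¹ * (jac η z).adjugate j i := by
      intro i j
      simp [Amat, Matrix.inv_def, Ring.inverse_eq_inv', Jdet, Matrix.transpose_apply,
        Matrix.smul_apply, smul_eq_mul]
    have d1 : DifferentiableAt ℝ (fun w => jac η w 0 0 * jac η w 1 1 * jac η w 2 2) z :=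
      ((hd 0 0).mul (hd 1 1)).mul (hd 2 2)
    have d2 : DifferentiableAt ℝ (fun w => jac η w 0 0 * jac η w 1 2 * jac η w 2 1) z :=
      ((hd 0 0).mul (hd 1 2)).mul (hd 2 1)
    have d3 : DifferentiableAt ℝ (fun w => jac η w 0 1 * jac η w 1 0 * jac η w 2 2) z :=
      ((hd 0 1).mul (hd 1 0)).mul (hd 2 2)
    have d4 : DifferentiableAt ℝ (fun w => jac η w 0 1 * jac η w 1 2 * jac η w 2 0) z :=
      ((hd 0 1).mul (hd 1 2)).mul (hd 2 0)
    have d5 : DifferentiableAt ℝ (fun w => jac η w 0 2 * jac η w 1 0 * jac η w 2 1) z :=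
      ((hd 0 2).mul (hd 1 0)).mul (hd 2 1)
    have d6 : DifferentiableAt ℝ (fun w => jac η w 0 2 * jac η w 1 1 * jac η w 2 0) z :=
      ((hd 0 2).mul (hd 1 1)).mul (hd 2 0)
    rw [hJfun,
      dt_sub' (f := fun w => jac η w 0 0 * jac η w 1 1 * jac η w 2 2 - jac η w 0 0 * jac η w 1 2 * jac η w 2 1 - jac η w 0 1 * jac η w 1 0 * jac η w 2 2 + jac η w 0 1 * jac η w 1 2 * jac η w 2 0 + jac η w 0 2 * jac η w 1 0 * jac η w 2 1) ((((d1.sub d2).sub d3).add d4).add d5) d6,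
      dt_add' (f := fun w => jac η w 0 0 * jac η w 1 1 * jac η w 2 2 - jac η w 0 0 * jac η w 1 2 * jac η w 2 1 - jac η w 0 1 * jac η w 1 0 * jac η w 2 2 + jac η w 0 1 * jac η w 1 2 * jac η w 2 0) (((d1.sub d2).sub d3).add d4) d5,
      dt_add' (f := fun w => jac η w 0 0 * jac η w 1 1 * jac η w 2 2 - jac η w 0 0 * jac η w 1 2 * jac η w 2 1 - jac η w 0 1 * jac η w 1 0 * jac η w 2 2) ((d1.sub d2).sub d3) d4,
      dt_sub' (f := fun w => jac η w 0 0 * jac η w 1 1 * jac η w 2 2 - jac η w 0 0 * jac η w 1 2 * jac η w 2 1) (d1.sub d2) d3,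
      dt_sub' d1 d2,
      dt_mul3 (hd 0 0) (hd 1 1) (hd 2 2),
      dt_mul3 (hd 0 0) (hd 1 2) (hd 2 1),
      dt_mul3 (hd 0 1) (hd 1 0) (hd 2 2),
      dt_mul3 (hd 0 1) (hd 1 2) (hd 2 0),
      dt_mul3 (hd 0 2) (hd 1 0) (hd 2 1),
      dt_mul3 (hd 0 2) (hd 1 1) (hd 2 0)]
    simp only [dtm z hz]
    simp only [divA, Fin.sum_univ_three, hAmat, Matrix.adjugate_fin_three,
      Matrix.cons_val', Matrix.cons_val_zero, Matrix.cons_val_one, Matrix.head_cons,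
      Matrix.empty_val', Matrix.cons_val_fin_one, Matrix.head_fin_const, Matrix.cons_val_two,
      Matrix.tail_cons, Matrix.of_apply, Matrix.cons_val]
    field_simp
    ring
  have hdJγ : ∀ z ∈ S, HasFDerivAt (fun w => Jdet η w ^ γ)
      ((γ * Jdet η z ^ (γ - 1)) • fderiv ℝ (fun w => Jdet η w) z) z := fun z hz =>
    (Real.hasDerivAt_rpow_const (Or.inl (hJpos z hz).ne')).comp_hasFDerivAt z
      (hdJ z hz).hasFDerivAt
  have keyF : ∀ z ∈ S, dt (fun w => p w * Jdet η w ^ γ) z = 0 := by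
    intro z hz
    have hJz := hJpos z hz
    have h1 : dt (fun w => Jdet η w ^ γ) z
        = γ * Jdet η z ^ (γ - 1) * dt (fun w => Jdet η w) z := by
      have h2 := (hdJγ z hz).fderiv
      simp only [dt, h2, ContinuousLinearMap.smul_apply, smul_eq_mul]
    rw [dt_mul' (hdp z hz) (hdJγ z hz).differentiableAt, h1, key1 z hz]
    have hpow : Jdet η z ^ (γ - 1) * Jdet η z = Jdet η z ^ γ := by
      have h := Real.rpow_add hJz (γ - 1) 1
      rw [Real.rpow_one] at h
      rw [show γ - 1 + 1 = γ by ring] at h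
      linarith
    have heq := hpeq z hz
    linear_combination Jdet η z ^ γ * heq + (p z * γ * divA η (vel η) z) * hpow
  refine ⟨keyF, ?_⟩
  intro t ht t₀ ht₀ x hx
  have hconv : Convex ℝ I := hIc.convex
  have hder : ∀ s ∈ I, HasDerivAt (fun s : ℝ => p (s, x) * Jdet η (s, x) ^ γ) 0 s := by
    intro s hs
    have hz : ((s, x) : Pt) ∈ S := ⟨hs, hx⟩
    have hF : DifferentiableAt ℝ (fun w => p w * Jdet η w ^ γ) (s, x) :=
      (hdp _ hz).mul (hdJγ _ hz).differentiableAt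
    have hline : HasDerivAt (fun s : ℝ => ((s, x) : Pt)) (1, 0) s :=
      (hasDerivAt_id s).prodMk (hasDerivAt_const s x)
    have h := hF.hasFDerivAt.comp_hasDerivAt s hline
    have h0 : fderiv ℝ (fun w => p w * Jdet η w ^ γ) (s, x) ((1 : ℝ), (0 : V3)) = 0 :=
      keyF _ hz
    rw [h0] at h
    exact h
  have hgc : (fun s : ℝ => p (s, x) * Jdet η (s, x) ^ γ) t
      = (fun s : ℝ => p (s, x) * Jdet η (s, x) ^ γ) t₀ := by
    apply hconv.is_const_of_fderivWithin_eq_zero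
      (fun s hs => (hder s hs).differentiableAt.differentiableWithinAt) _ ht ht₀
    intro s hs
    rw [fderivWithin_of_isOpen hI hs, (hder s hs).hasFDerivAt.fderiv]
    ext u
    simp
  exact hgc
end
end

section
/- (Cauchy's integral for the magnetic field.) Suppose in addition that b : I × Ω → ℝ³ is smooth and satisfies the Lagrangian induction equation ∂_t b_i + b_i div_A v = Σ_{k,j} b_k A_{kj} ∂_j v_i for i = 1,2,3 on I × Ω (i.e. ∂_t b + b div_A v = (b·∇_A)v). Then ∂_t (J Aᵀ b) = 0 on I × Ω; equivalently, for all t, t₀ ∈ I and x ∈ Ω, J(t,x) A(t,x)ᵀ b(t,x) = J(t₀,x) A(t₀,x)ᵀ b(t₀,x), which can be rewritten as b(t,x) = J(t,x)^{-1} Σ_k (J(t₀,x) A(t₀,x)ᵀ b(t₀,x))_k ∂_k η(t,x). -/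
noncomputable section

open Matrix Set

def HasDt (f : Pt → ℝ) (z : Pt) (c : ℝ) : Prop :=
  ∃ L : Pt →L[ℝ] ℝ, HasFDerivAt f L z ∧ L (1, 0) = c

theorem HasDt.dt_eq {f : Pt → ℝ} {z : Pt} {c : ℝ} (h : HasDt f z c) : dt f z = c := by
  obtain ⟨L, hL, hc⟩ := h
  rw [dt, hL.fderiv]; exact hc

theorem HasDt.add {f g : Pt → ℝ} {z : Pt} {c d : ℝ} (hf : HasDt f z c) (hg : HasDt g z d) :
    HasDt (fun w => f w + g w) z (c + d) := by
  obtain ⟨L, hL, hc⟩ := hf; obtain ⟨M, hM, hd⟩ := hg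
  exact ⟨L + M, hL.add hM, by simp [hc, hd]⟩

theorem HasDt.sub {f g : Pt → ℝ} {z : Pt} {c d : ℝ} (hf : HasDt f z c) (hg : HasDt g z d) :
    HasDt (fun w => f w - g w) z (c - d) := by
  obtain ⟨L, hL, hc⟩ := hf; obtain ⟨M, hM, hd⟩ := hg
  exact ⟨L - M, hL.sub hM, by simp [hc, hd]⟩

theorem HasDt.mul {f g : Pt → ℝ} {z : Pt} {c d : ℝ} (hf : HasDt f z c) (hg : HasDt g z d) :
    HasDt (fun w => f w * g w) z (c * g z + f z * d) := by
  obtain ⟨L, hL, hc⟩ := hf; obtain ⟨M, hM, hd⟩ := hg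
  refine ⟨f z • M + g z • L, hL.mul hM, by simp [hc, hd]; ring⟩

theorem HasDt.congr_value {f : Pt → ℝ} {z : Pt} {c d : ℝ} (hf : HasDt f z c) (h : c = d) :
    HasDt f z d := h ▸ hf

theorem HasDt.congr_fun {f g : Pt → ℝ} {z : Pt} {c : ℝ} (hf : HasDt f z c)
    (h : ∀ w, f w = g w) : HasDt g z c := by
  have : f = g := funext h
  exact this ▸ hf

theorem hasDt_dx {U : Set Pt} (hU : IsOpen U) {f : Pt → ℝ}
    (hf : ContDiffOn ℝ (⊤ : ℕ∞) f U) {z : Pt} (hz : z ∈ U) (j : Fin 3) :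
    HasDt (fun w => dx j f w) z (dx j (fun w => dt f w) z) := by
  have hdf : DifferentiableAt ℝ (fderiv ℝ f) z :=
    ((hf.fderiv_of_isOpen hU (by exact WithTop.coe_le_coe.mpr le_top)).differentiableOn
      one_ne_zero).differentiableAt (hU.mem_nhds hz)
  have hsym := (hf.contDiffAt (hU.mem_nhds hz)).isSymmSndFDerivAt (by simp; exact WithTop.coe_le_coe.mpr le_top)
  have key : ∀ u : Pt, HasFDerivAt (fun w => fderiv ℝ f w u)
      ((ContinuousLinearMap.apply ℝ ℝ u).comp (fderiv ℝ (fderiv ℝ f) z)) z := fun u =>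
    (ContinuousLinearMap.apply ℝ ℝ u).hasFDerivAt.comp z hdf.hasFDerivAt
  refine ⟨_, key (0, Pi.single j 1), ?_⟩
  have h1 : dx j (fun w => dt f w) z = fderiv ℝ (fderiv ℝ f) z (0, Pi.single j 1) (1, 0) := by
    simp only [dx, dt]
    rw [(key (1, 0)).fderiv]
    rfl
  rw [h1, ← hsym]
  rfl

set_option maxHeartbeats 2000000 in
theorem keyHasDt (I : Set ℝ) (Ω : Set V3) (hI : IsOpen I) (hΩ : IsOpen Ω)
    (η : Pt → V3) (hη : ContDiffOn ℝ (⊤ : ℕ∞) η (I ×ˢ Ω))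
    (hinv : ∀ z ∈ I ×ˢ Ω, IsUnit (jac η z).det)
    (b : Pt → V3) (hb : ContDiffOn ℝ (⊤ : ℕ∞) b (I ×ˢ Ω))
    (hind : ∀ z ∈ I ×ˢ Ω, ∀ i : Fin 3,
      dt (fun w => b w i) z + b z i * divA η (vel η) z
        = ∑ k, ∑ j, b z k * Amat η z k j * dx j (fun w => vel η w i) z)
    (z : Pt) (hz : z ∈ I ×ˢ Ω) (i : Fin 3) :
    HasDt (fun w => ((jac η w).adjugate *ᵥ b w) i) z 0 := by
  have hU : IsOpen (I ×ˢ Ω) := hI.prod hΩ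
  have hF : ∀ k l, HasDt (fun w => jac η w k l) z (dx l (fun w => vel η w k) z) := by
    intro k l
    have hcomp : ContDiffOn ℝ (⊤ : ℕ∞) (fun w => η w k) (I ×ˢ Ω) := (contDiffOn_pi.mp hη) k
    have h := hasDt_dx hU hcomp hz l
    simpa [jac, dx, dt, vel, Matrix.of_apply] using h
  have hG : ∀ k, HasDt (fun w => b w k) z (dt (fun w => b w k) z) := by
    intro k
    have hbz : DifferentiableAt ℝ b z :=
      (hb.differentiableOn (by simp)).differentiableAt (hU.mem_nhds hz)
    exact ⟨_, ((differentiableAt_pi.mp hbz) k).hasFDerivAt, rfl⟩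
  have hD0 : (jac η z).det ≠ 0 := (hinv z hz).ne_zero
  have hq' : ∀ k, dt (fun w => b w k) z
      = (∑ k', ∑ j, b z k' * Amat η z k' j * dx j (fun w => vel η w k) z)
        - b z k * divA η (vel η) z := fun k => eq_sub_of_add_eq (hind z hz k)
  have hDexp := hD0
  rw [Matrix.det_fin_three] at hDexp
  fin_cases i
  · refine HasDt.congr_fun (HasDt.congr_value
      (((((hF 1 1).mul (hF 2 2)).sub ((hF 1 2).mul (hF 2 1))).mul (hG 0)).add
       (((((hF 0 2).mul (hF 2 1)).sub ((hF 0 1).mul (hF 2 2))).mul (hG 1)).add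
        ((((hF 0 1).mul (hF 1 2)).sub ((hF 0 2).mul (hF 1 1))).mul (hG 2)))) ?_) ?_
    · rw [hq' 0, hq' 1, hq' 2]
      simp only [divA, Amat, Matrix.inv_def, Ring.inverse_eq_inv', Matrix.adjugate_fin_three,
        Matrix.transpose_apply, Matrix.smul_apply, smul_eq_mul, Fin.sum_univ_three,
        Matrix.cons_val', Matrix.cons_val_zero, Matrix.cons_val_one, Matrix.head_cons,
        Matrix.head_fin_const, Matrix.empty_val', Matrix.cons_val_fin_one, Matrix.of_apply,
        Matrix.cons_val_two, Matrix.tail_cons]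
      field_simp
      rw [Matrix.det_fin_three]
      ring
    · intro w
      simp [Matrix.adjugate_fin_three, Matrix.mulVec, dotProduct, Fin.sum_univ_three]
      ring
  · refine HasDt.congr_fun (HasDt.congr_value
      (((((hF 1 2).mul (hF 2 0)).sub ((hF 1 0).mul (hF 2 2))).mul (hG 0)).add
       (((((hF 0 0).mul (hF 2 2)).sub ((hF 0 2).mul (hF 2 0))).mul (hG 1)).add
        ((((hF 0 2).mul (hF 1 0)).sub ((hF 0 0).mul (hF 1 2))).mul (hG 2)))) ?_) ?_
    · rw [hq' 0, hq' 1, hq' 2]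
      simp only [divA, Amat, Matrix.inv_def, Ring.inverse_eq_inv', Matrix.adjugate_fin_three,
        Matrix.transpose_apply, Matrix.smul_apply, smul_eq_mul, Fin.sum_univ_three,
        Matrix.cons_val', Matrix.cons_val_zero, Matrix.cons_val_one, Matrix.head_cons,
        Matrix.head_fin_const, Matrix.empty_val', Matrix.cons_val_fin_one, Matrix.of_apply,
        Matrix.cons_val_two, Matrix.tail_cons]
      field_simp
      rw [Matrix.det_fin_three]
      ring
    · intro w
      simp [Matrix.adjugate_fin_three, Matrix.mulVec, dotProduct, Fin.sum_univ_three]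
      ring
  · refine HasDt.congr_fun (HasDt.congr_value
      (((((hF 1 0).mul (hF 2 1)).sub ((hF 1 1).mul (hF 2 0))).mul (hG 0)).add
       (((((hF 0 1).mul (hF 2 0)).sub ((hF 0 0).mul (hF 2 1))).mul (hG 1)).add
        ((((hF 0 0).mul (hF 1 1)).sub ((hF 0 1).mul (hF 1 0))).mul (hG 2)))) ?_) ?_
    · rw [hq' 0, hq' 1, hq' 2]
      simp only [divA, Amat, Matrix.inv_def, Ring.inverse_eq_inv', Matrix.adjugate_fin_three,
        Matrix.transpose_apply, Matrix.smul_apply, smul_eq_mul, Fin.sum_univ_three,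
        Matrix.cons_val', Matrix.cons_val_zero, Matrix.cons_val_one, Matrix.head_cons,
        Matrix.head_fin_const, Matrix.empty_val', Matrix.cons_val_fin_one, Matrix.of_apply,
        Matrix.cons_val_two, Matrix.tail_cons]
      field_simp
      rw [Matrix.det_fin_three]
      ring
    · intro w
      simp [Matrix.adjugate_fin_three, Matrix.mulVec, dotProduct, Fin.sum_univ_three]
      ring

theorem eqAdj (I : Set ℝ) (Ω : Set V3)
    (η : Pt → V3) (hinv : ∀ z ∈ I ×ˢ Ω, IsUnit (jac η z).det)
    (b : Pt → V3) (w : Pt) (hw : w ∈ I ×ˢ Ω) (i : Fin 3) :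
    Jdet η w * ((Amat η w)ᵀ *ᵥ b w) i = ((jac η w).adjugate *ᵥ b w) i := by
  have hD : (jac η w).det ≠ 0 := (hinv w hw).ne_zero
  simp only [Jdet, Amat, transpose_transpose, Matrix.inv_def, Ring.inverse_eq_inv',
    Matrix.smul_mulVec, Pi.smul_apply, smul_eq_mul]
  field_simp

/-- Cauchy's integral for the magnetic field. If `b` satisfies the Lagrangian
induction equation `∂ₜ b + b div_A v = (b·∇_A) v`, then `∂ₜ (J Aᵀ b) = 0` on `I × Ω`;
equivalently `J Aᵀ b` at time `t` equals its value at time `t₀`, which can be rewritten as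
`b(t,x) = J(t,x)⁻¹ Σₖ (J(t₀,x) A(t₀,x)ᵀ b(t₀,x))ₖ ∂ₖ η(t,x)`. -/
theorem cauchy_integral_magnetic_field
    (I : Set ℝ) (Ω : Set V3) (hI : IsOpen I) (hIc : I.OrdConnected) (hΩ : IsOpen Ω)
    (η : Pt → V3) (hη : ContDiffOn ℝ (⊤ : ℕ∞) η (I ×ˢ Ω))
    (hinv : ∀ z ∈ I ×ˢ Ω, IsUnit (jac η z).det)
    (b : Pt → V3) (hb : ContDiffOn ℝ (⊤ : ℕ∞) b (I ×ˢ Ω))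
    (hind : ∀ z ∈ I ×ˢ Ω, ∀ i : Fin 3,
      dt (fun w => b w i) z + b z i * divA η (vel η) z
        = ∑ k, ∑ j, b z k * Amat η z k j * dx j (fun w => vel η w i) z) :
    (∀ z ∈ I ×ˢ Ω, ∀ i : Fin 3,
      dt (fun w => Jdet η w * ((Amat η w)ᵀ *ᵥ b w) i) z = 0) ∧
    (∀ t ∈ I, ∀ t₀ ∈ I, ∀ x ∈ Ω,
      Jdet η (t, x) • ((Amat η (t, x))ᵀ *ᵥ b (t, x))
        = Jdet η (t₀, x) • ((Amat η (t₀, x))ᵀ *ᵥ b (t₀, x))) ∧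
    (∀ t ∈ I, ∀ t₀ ∈ I, ∀ x ∈ Ω, ∀ i : Fin 3,
      b (t, x) i = (Jdet η (t, x))⁻¹ *
        ∑ k, (Jdet η (t₀, x) * ((Amat η (t₀, x))ᵀ *ᵥ b (t₀, x)) k) * jac η (t, x) i k) := by
  have hU : IsOpen (I ×ˢ Ω) := hI.prod hΩ
  have key := keyHasDt I Ω hI hΩ η hη hinv b hb hind
  -- Part 1
  have part1 : ∀ z ∈ I ×ˢ Ω, ∀ i : Fin 3,
      dt (fun w => Jdet η w * ((Amat η w)ᵀ *ᵥ b w) i) z = 0 := by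
    intro z hz i
    have heq : (fun w => Jdet η w * ((Amat η w)ᵀ *ᵥ b w) i)
        =ᶠ[nhds z] (fun w => ((jac η w).adjugate *ᵥ b w) i) := by
      filter_upwards [hU.mem_nhds hz] with w hw using eqAdj I Ω η hinv b w hw i
    rw [dt, heq.fderiv_eq]
    exact (key z hz i).dt_eq
  -- Part 2
  have part2 : ∀ t ∈ I, ∀ t₀ ∈ I, ∀ x ∈ Ω,
      Jdet η (t, x) • ((Amat η (t, x))ᵀ *ᵥ b (t, x))
        = Jdet η (t₀, x) • ((Amat η (t₀, x))ᵀ *ᵥ b (t₀, x)) := by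
    intro t ht t₀ ht₀ x hx
    funext i
    have hmem : ∀ s ∈ I, ((s : ℝ), x) ∈ I ×ˢ Ω := fun s hs => ⟨hs, hx⟩
    set g : ℝ → ℝ := fun s => ((jac η (s, x)).adjugate *ᵥ b (s, x)) i with hg
    have hderiv : ∀ s ∈ I, HasDerivAt g 0 s := by
      intro s hs
      obtain ⟨L, hL, h10⟩ := key (s, x) (hmem s hs) i
      have hι : HasDerivAt (fun s' : ℝ => ((s' : ℝ), x)) ((1 : ℝ), (0 : V3)) s :=
        (hasDerivAt_id s).prodMk (hasDerivAt_const s x)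
      have hc := hL.comp_hasDerivAt s hι
      rw [h10] at hc
      exact hc
    have hconst : g t = g t₀ := by
      refine Convex.is_const_of_fderivWithin_eq_zero hIc.convex
        (fun s hs => (hderiv s hs).differentiableAt.differentiableWithinAt) ?_ ht ht₀
      intro s hs
      rw [fderivWithin_of_isOpen hI hs]
      refine ContinuousLinearMap.ext_ring ?_
      have h1 : fderiv ℝ g s 1 = deriv g s := rfl
      rw [h1, (hderiv s hs).deriv]
      simp
    have e1 := eqAdj I Ω η hinv b (t, x) (hmem t ht) i
    have e2 := eqAdj I Ω η hinv b (t₀, x) (hmem t₀ ht₀) i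
    simp only [Pi.smul_apply, smul_eq_mul]
    rw [e1, e2]
    exact hconst
  refine ⟨part1, part2, ?_⟩
  -- Part 3
  intro t ht t₀ ht₀ x hx i
  have hu : IsUnit (jac η (t, x)).det := hinv _ ⟨ht, hx⟩
  have hD : Jdet η (t, x) ≠ 0 := hu.ne_zero
  have h2 := part2 t ht t₀ ht₀ x hx
  have hcomp : ∀ k : Fin 3, Jdet η (t₀, x) * ((Amat η (t₀, x))ᵀ *ᵥ b (t₀, x)) k
      = Jdet η (t, x) * (((jac η (t, x))⁻¹) *ᵥ b (t, x)) k := by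
    intro k
    have := congrFun h2 k
    simp only [Pi.smul_apply, smul_eq_mul] at this
    rw [← this]
    simp [Amat, transpose_transpose]
  simp only [hcomp]
  have hsum : ∑ k : Fin 3, Jdet η (t, x) * (((jac η (t, x))⁻¹) *ᵥ b (t, x)) k * jac η (t, x) i k
      = Jdet η (t, x) * ((jac η (t, x)) *ᵥ (((jac η (t, x))⁻¹) *ᵥ b (t, x))) i := by
    simp only [Matrix.mulVec, dotProduct, Fin.sum_univ_three]
    ring
  rw [hsum, Matrix.mulVec_mulVec, Matrix.mul_nonsing_inv _ hu, Matrix.one_mulVec,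
    inv_mul_cancel_left₀ hD]
end
end

section
/- Suppose in addition that b : I × Ω → ℝ³ is smooth and satisfies the Lagrangian induction equation ∂_t b + b div_A v = (b·∇_A)v on I × Ω (componentwise: ∂_t b_i + b_i Σ_{k,j} A_{kj} ∂_j v_k = Σ_{k,j} b_k A_{kj} ∂_j v_i). Then the quantity J div_A b is independent of time: ∂_t ( J Σ_{i,j} A_{ij} ∂_j b_i ) = 0 at every point of I × Ω. -/
noncomputable section

open Matrix Set

namespace JDC

set_option linter.dupNamespace false

def D (u : Pt) (F : Pt → ℝ) (z : Pt) : ℝ := fderiv ℝ F z u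

variable {U : Set Pt} {f g : Pt → ℝ} {z u w : Pt} {η b : Pt → V3}

lemma D_dt : D (1,0) f z = dt f z := rfl
lemma D_dx {j : Fin 3} : D (0, Pi.single j 1) f z = dx j f z := rfl

lemma dAt {F : Type*} [NormedAddCommGroup F] [NormedSpace ℝ F] {f : Pt → F}
    (h : ContDiffOn ℝ (⊤ : ℕ∞) f U) (hU : IsOpen U) (hz : z ∈ U) :
    DifferentiableAt ℝ f z :=
  ((ContDiffOn.differentiableOn h (by simp)) z hz).differentiableAt (hU.mem_nhds hz)

lemma SmD (hU : IsOpen U) (hf : ContDiffOn ℝ (⊤ : ℕ∞) f U) (u : Pt) :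
    ContDiffOn ℝ (⊤ : ℕ∞) (D u f) U :=
  (hf.fderiv_of_isOpen hU (by simp)).clm_apply contDiffOn_const

lemma D_mul (hf : DifferentiableAt ℝ f z) (hg : DifferentiableAt ℝ g z) (u : Pt) :
    D u (fun y => f y * g y) z = D u f z * g z + f z * D u g z := by
  simp only [D, fderiv_fun_mul hf hg]
  simp only [ContinuousLinearMap.add_apply, ContinuousLinearMap.smul_apply, smul_eq_mul]
  ring

lemma D_sub (hf : DifferentiableAt ℝ f z) (hg : DifferentiableAt ℝ g z) (u : Pt) :
    D u (fun y => f y - g y) z = D u f z - D u g z := by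
  simp only [D, fderiv_fun_sub hf hg]; simp

lemma D_sum {ι : Type*} {s : Finset ι} {f : ι → Pt → ℝ}
    (h : ∀ i ∈ s, DifferentiableAt ℝ (f i) z) (u : Pt) :
    D u (fun y => ∑ i ∈ s, f i y) z = ∑ i ∈ s, D u (f i) z := by
  simp only [D, fderiv_fun_sum h]; simp

lemma D_congr (hU : IsOpen U) (hz : z ∈ U) (h : ∀ y ∈ U, f y = g y) (u : Pt) :
    D u f z = D u g z := by
  have : f =ᶠ[nhds z] g := Filter.eventuallyEq_of_mem (hU.mem_nhds hz) h
  simp [D, this.fderiv_eq]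

lemma D_zero (hU : IsOpen U) (hz : z ∈ U) (h : ∀ y ∈ U, f y = 0) (u : Pt) :
    D u f z = 0 := by
  rw [D_congr hU hz h u]; simp [D]

lemma fderiv_eval (hf' : DifferentiableAt ℝ (fderiv ℝ f) z) (w u : Pt) :
    fderiv ℝ (fun y => fderiv ℝ f y w) z u = fderiv ℝ (fderiv ℝ f) z u w := by
  have h := ((ContinuousLinearMap.apply ℝ ℝ w).hasFDerivAt
    (x := fderiv ℝ f z)).comp z hf'.hasFDerivAt
  have := h.fderiv
  rw [show (fun y => fderiv ℝ f y w)
      = (⇑(ContinuousLinearMap.apply ℝ ℝ w) ∘ fderiv ℝ f) from rfl, this]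
  rfl

lemma D_comm (hU : IsOpen U) (hf : ContDiffOn ℝ (⊤ : ℕ∞) f U) (hz : z ∈ U) (u w : Pt) :
    D u (D w f) z = D w (D u f) z := by
  have hev : ∀ᶠ y in nhds z, HasFDerivAt f (fderiv ℝ f y) y := by
    filter_upwards [hU.mem_nhds hz] with y hy
    exact (dAt hf hU hy).hasFDerivAt
  have hf' : DifferentiableAt ℝ (fderiv ℝ f) z :=
    dAt (hf.fderiv_of_isOpen hU (by simp)) hU hz
  show fderiv ℝ (fun y => fderiv ℝ f y w) z u = fderiv ℝ (fun y => fderiv ℝ f y u) z w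
  rw [fderiv_eval hf', fderiv_eval hf']
  exact second_derivative_symmetric_of_eventually hev hf'.hasFDerivAt u w

/-- Jacobian entry as a function. -/
def Ff (η : Pt → V3) (i j : Fin 3) : Pt → ℝ := fun w => dx j (fun y => η y i) w

lemma Ff_apply (i j : Fin 3) : Ff η i j z = jac η z i j := rfl

/-- Explicit 3×3 adjugate entry. -/
def adjE (A : Matrix (Fin 3) (Fin 3) ℝ) (j i : Fin 3) : ℝ :=
  A (i+1) (j+1) * A (i+2) (j+2) - A (i+1) (j+2) * A (i+2) (j+1)

lemma adjE_eq (A : Matrix (Fin 3) (Fin 3) ℝ) (j i : Fin 3) :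
    A.adjugate j i = adjE A j i := by
  fin_cases j <;> fin_cases i <;>
    simp [adjE, Matrix.adjugate_fin_three] <;> ring

/-- The conserved quantity `c_j = (adj(∇η) b)_j`. -/
def cfn (η b : Pt → V3) (j : Fin 3) : Pt → ℝ :=
  fun z => ∑ i, adjE (jac η z) j i * b z i

lemma smComp (hη : ContDiffOn ℝ (⊤ : ℕ∞) η U) (i : Fin 3) :
    ContDiffOn ℝ (⊤ : ℕ∞) (fun w => η w i) U := (contDiffOn_pi.mp hη) i

lemma smFf (hU : IsOpen U) (hη : ContDiffOn ℝ (⊤ : ℕ∞) η U) (i j : Fin 3) :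
    ContDiffOn ℝ (⊤ : ℕ∞) (Ff η i j) U := SmD hU (smComp hη i) _

lemma smCfn (hU : IsOpen U) (hη : ContDiffOn ℝ (⊤ : ℕ∞) η U) (hb : ContDiffOn ℝ (⊤ : ℕ∞) b U)
    (j : Fin 3) : ContDiffOn ℝ (⊤ : ℕ∞) (cfn η b j) U := by
  apply ContDiffOn.sum (fun i _ => ContDiffOn.mul ?_ (smComp hb i))
  exact ((smFf hU hη _ _).mul (smFf hU hη _ _)).sub ((smFf hU hη _ _).mul (smFf hU hη _ _))

/-- Full product-rule expansion of a directional derivative of `cfn`. -/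
lemma D_cfn (hU : IsOpen U) (hη : ContDiffOn ℝ (⊤ : ℕ∞) η U) (hb : ContDiffOn ℝ (⊤ : ℕ∞) b U)
    (hz : z ∈ U) (u : Pt) (j : Fin 3) :
    D u (cfn η b j) z
      = ∑ i, ((D u (Ff η (i+1) (j+1)) z * Ff η (i+2) (j+2) z
              + Ff η (i+1) (j+1) z * D u (Ff η (i+2) (j+2)) z
              - (D u (Ff η (i+1) (j+2)) z * Ff η (i+2) (j+1) z
              + Ff η (i+1) (j+2) z * D u (Ff η (i+2) (j+1)) z)) * b z i
            + adjE (jac η z) j i * D u (fun w => b w i) z) := by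
  have hF : ∀ a c : Fin 3, DifferentiableAt ℝ (Ff η a c) z :=
    fun a c => dAt (smFf hU hη a c) hU hz
  have hbd : ∀ i : Fin 3, DifferentiableAt ℝ (fun w => b w i) z :=
    fun i => dAt (smComp hb i) hU hz
  have hA : ∀ i : Fin 3, DifferentiableAt ℝ
      (fun w => Ff η (i+1) (j+1) w * Ff η (i+2) (j+2) w
        - Ff η (i+1) (j+2) w * Ff η (i+2) (j+1) w) z :=
    fun i => ((hF _ _).mul (hF _ _)).sub ((hF _ _).mul (hF _ _))
  have hc : cfn η b j = fun w => ∑ i,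
      (Ff η (i+1) (j+1) w * Ff η (i+2) (j+2) w
        - Ff η (i+1) (j+2) w * Ff η (i+2) (j+1) w) * b w i := rfl
  rw [hc, D_sum (fun i _ => (hA i).fun_mul (hbd i))]
  refine Finset.sum_congr rfl fun i _ => ?_
  rw [D_mul (hA i) (hbd i), D_sub ((hF _ _).fun_mul (hF _ _)) ((hF _ _).fun_mul (hF _ _)),
    D_mul (hF _ _) (hF _ _), D_mul (hF _ _) (hF _ _)]
  rfl

/-- `A i j = J⁻¹ ⬝ adjE j i`. -/
lemma Amat_eq (z : Pt) (i j : Fin 3) :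
    Amat η z i j = (Jdet η z)⁻¹ * adjE (jac η z) j i := by
  rw [Amat, Matrix.transpose_apply, Matrix.inv_def, Matrix.smul_apply, smul_eq_mul,
    Ring.inverse_eq_inv, adjE_eq]
  rfl

/-- Mixed partials: time derivative of a Jacobian entry is a spatial derivative of velocity. -/
lemma dt_Ff (hU : IsOpen U) (hη : ContDiffOn ℝ (⊤ : ℕ∞) η U) (hz : z ∈ U) (i j : Fin 3) :
    D (1,0) (Ff η i j) z = dx j (fun w => vel η w i) z :=
  D_comm hU (smComp hη i) hz (1,0) (0, Pi.single j 1)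

/-- Symmetry of second spatial derivatives of `η`. -/
lemma dx_Ff_symm (hU : IsOpen U) (hη : ContDiffOn ℝ (⊤ : ℕ∞) η U) (hz : z ∈ U) (i j l : Fin 3) :
    D (0, Pi.single l 1) (Ff η i j) z = D (0, Pi.single j 1) (Ff η i l) z :=
  D_comm hU (smComp hη i) hz _ _

lemma fin3_arith : ((0:Fin 3)+1 = 1) ∧ ((0:Fin 3)+2 = 2) ∧ ((1:Fin 3)+1 = 2)
    ∧ ((1:Fin 3)+2 = 0) ∧ ((2:Fin 3)+1 = 0) ∧ ((2:Fin 3)+2 = 1) := by decide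

set_option maxHeartbeats 1000000 in
/-- Piola identity: `J div_A b = ∑ⱼ ∂ⱼ cⱼ`. -/
lemma piola_point (hU : IsOpen U) (hη : ContDiffOn ℝ (⊤ : ℕ∞) η U) (hb : ContDiffOn ℝ (⊤ : ℕ∞) b U)
    (hz : z ∈ U) (hdet : (jac η z).det ≠ 0) :
    Jdet η z * ∑ i, ∑ j, Amat η z i j * dx j (fun y => b y i) z
      = ∑ j, D (0, Pi.single j 1) (cfn η b j) z := by
  have hd : Jdet η z ≠ 0 := hdet
  obtain ⟨e01, e02, e11, e12, e21, e22⟩ := fin3_arith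
  have s10 : ∀ a : Fin 3, dx 1 (Ff η a 0) z = dx 0 (Ff η a 1) z :=
    fun a => dx_Ff_symm hU hη hz a 0 1
  have s20 : ∀ a : Fin 3, dx 2 (Ff η a 0) z = dx 0 (Ff η a 2) z :=
    fun a => dx_Ff_symm hU hη hz a 0 2
  have s21 : ∀ a : Fin 3, dx 2 (Ff η a 1) z = dx 1 (Ff η a 2) z :=
    fun a => dx_Ff_symm hU hη hz a 1 2
  conv_rhs => rw [Fin.sum_univ_three]
  rw [D_cfn hU hη hb hz, D_cfn hU hη hb hz, D_cfn hU hη hb hz]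
  simp only [D_dx, Fin.sum_univ_three, adjE, Amat_eq, e01, e02, e11, e12, e21, e22,
    s10, s20, s21, Ff_apply]
  field_simp
  ring

set_option maxHeartbeats 4000000 in
/-- The induction equation implies `∂ₜ cⱼ = 0`. -/
lemma dtc_zero (hU : IsOpen U) (hη : ContDiffOn ℝ (⊤ : ℕ∞) η U) (hb : ContDiffOn ℝ (⊤ : ℕ∞) b U)
    (hz : z ∈ U) (hdet : (jac η z).det ≠ 0)
    (hind : ∀ i : Fin 3,
      dt (fun w => b w i) z + b z i * (∑ k, ∑ j, Amat η z k j * dx j (fun w => vel η w k) z)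
        = ∑ k, ∑ j, b z k * Amat η z k j * dx j (fun w => vel η w i) z)
    (j : Fin 3) : D (1,0) (cfn η b j) z = 0 := by
  have hd : Jdet η z ≠ 0 := hdet
  obtain ⟨e01, e02, e11, e12, e21, e22⟩ := fin3_arith
  have htb : ∀ i : Fin 3, dt (fun w => b w i) z
      = (∑ k, ∑ l, b z k * Amat η z k l * dx l (fun w => vel η w i) z)
        - b z i * (∑ k, ∑ l, Amat η z k l * dx l (fun w => vel η w k) z) :=
    fun i => eq_sub_of_add_eq (hind i)
  have hM : ∀ a c : Fin 3, D (1,0) (Ff η a c) z = dx c (fun w => vel η w a) z :=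
    dt_Ff hU hη hz
  have hJ : Jdet η z = jac η z 0 0 * jac η z 1 1 * jac η z 2 2
      - jac η z 0 0 * jac η z 1 2 * jac η z 2 1
      - jac η z 0 1 * jac η z 1 0 * jac η z 2 2
      + jac η z 0 1 * jac η z 1 2 * jac η z 2 0
      + jac η z 0 2 * jac η z 1 0 * jac η z 2 1
      - jac η z 0 2 * jac η z 1 1 * jac η z 2 0 := by
    rw [Jdet, Matrix.det_fin_three]
  have E : ∀ i : Fin 3, Jdet η z * dt (fun w => b w i) z
      = (∑ k, ∑ l, b z k * adjE (jac η z) l k * dx l (fun w => vel η w i) z)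
        - b z i * (∑ k, ∑ l, adjE (jac η z) l k * dx l (fun w => vel η w k) z) := by
    intro i
    rw [htb i]
    simp only [Amat_eq, Fin.sum_univ_three]
    field_simp
  suffices hS : Jdet η z * D (1,0) (cfn η b j) z = 0 by
    exact (mul_eq_zero.mp hS).resolve_left hd
  rw [D_cfn hU hη hb hz]
  simp only [hM, D_dt, Ff_apply]
  simp only [Fin.sum_univ_three, adjE, e01, e02, e11, e12, e21, e22] at E
  rw [hJ] at E
  rcases (by decide : ∀ a : Fin 3, a = 0 ∨ a = 1 ∨ a = 2) j with rfl | rfl | rfl <;>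
      rw [Fin.sum_univ_three] <;>
      simp only [adjE, e01, e02, e11, e12, e21, e22] <;>
      rw [hJ]
  · linear_combination
      (jac η z 1 1 * jac η z 2 2 - jac η z 1 2 * jac η z 2 1) * E 0
      + (jac η z 2 1 * jac η z 0 2 - jac η z 2 2 * jac η z 0 1) * E 1
      + (jac η z 0 1 * jac η z 1 2 - jac η z 0 2 * jac η z 1 1) * E 2
  · linear_combination
      (jac η z 1 2 * jac η z 2 0 - jac η z 1 0 * jac η z 2 2) * E 0
      + (jac η z 2 2 * jac η z 0 0 - jac η z 2 0 * jac η z 0 2) * E 1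
      + (jac η z 0 2 * jac η z 1 0 - jac η z 0 0 * jac η z 1 2) * E 2
  · linear_combination
      (jac η z 1 0 * jac η z 2 1 - jac η z 1 1 * jac η z 2 0) * E 0
      + (jac η z 2 0 * jac η z 0 1 - jac η z 2 1 * jac η z 0 0) * E 1
      + (jac η z 0 0 * jac η z 1 1 - jac η z 0 1 * jac η z 1 0) * E 2

end JDC

/-- If `b` satisfies the Lagrangian induction equation
`∂ₜ b + b div_A v = (b·∇_A) v`, then `J div_A b` is independent of time:
`∂ₜ (J Σᵢⱼ Aᵢⱼ ∂ⱼ bᵢ) = 0` at every point of `I × Ω`. -/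
theorem jacobian_divergence_conservation
    (I : Set ℝ) (Ω : Set V3) (hI : IsOpen I) (hIc : I.OrdConnected) (hΩ : IsOpen Ω)
    (η : Pt → V3) (hη : ContDiffOn ℝ (⊤ : ℕ∞) η (I ×ˢ Ω))
    (hinv : ∀ z ∈ I ×ˢ Ω, IsUnit (jac η z).det)
    (b : Pt → V3) (hb : ContDiffOn ℝ (⊤ : ℕ∞) b (I ×ˢ Ω))
    (hind : ∀ z ∈ I ×ˢ Ω, ∀ i : Fin 3,
      dt (fun w => b w i) z + b z i * (∑ k, ∑ j, Amat η z k j * dx j (fun w => vel η w k) z)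
        = ∑ k, ∑ j, b z k * Amat η z k j * dx j (fun w => vel η w i) z) :
    ∀ z ∈ I ×ˢ Ω,
      dt (fun w => Jdet η w * ∑ i, ∑ j, Amat η w i j * dx j (fun y => b y i) w) z = 0 := by
  intro z hz
  have hU : IsOpen (I ×ˢ Ω) := hI.prod hΩ
  have hdet : ∀ w ∈ I ×ˢ Ω, (jac η w).det ≠ 0 := fun w hw => (hinv w hw).ne_zero
  show JDC.D (1,0)
    (fun w => Jdet η w * ∑ i, ∑ j, Amat η w i j * dx j (fun y => b y i) w) z = 0
  have h1 : JDC.D (1,0)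
      (fun w => Jdet η w * ∑ i, ∑ j, Amat η w i j * dx j (fun y => b y i) w) z
      = JDC.D (1,0) (fun w => ∑ j, JDC.D (0, Pi.single j 1) (JDC.cfn η b j) w) z :=
    JDC.D_congr hU hz (fun w hw => JDC.piola_point hU hη hb hw (hdet w hw)) _
  rw [h1, JDC.D_sum (fun j _ => JDC.dAt (JDC.SmD hU (JDC.smCfn hU hη hb j) _) hU hz)]
  refine Finset.sum_eq_zero fun j _ => ?_
  rw [JDC.D_comm hU (JDC.smCfn hU hη hb j) hz]
  exact JDC.D_zero hU hz
    (fun w hw => JDC.dtc_zero hU hη hb hw (hdet w hw) (hind w hw) j) _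
end
end

section
/- Fix t₀ ∈ I and set c(x) := J(t₀,x) A(t₀,x)ᵀ b(t₀,x) ∈ ℝ³. Then for every (t,x) ∈ I × Ω and every i = 1,2,3: ( b(t₀,x) · N(t₀,x) ) ∂₃ v_i(t,x) = J(t₀,x) p(t₀,x)^{1/γ} ∂_t ( p^{-1/γ} b_i )(t,x) − Σ_{β=1,2} c_β(x) ∂_β v_i(t,x), where moreover b(t₀,x) · N(t₀,x) = c₃(x). -/
noncomputable section

open Matrix Set Topology

section Helpers

lemma line_hasDerivAt (x : V3) (t : ℝ) :
    HasDerivAt (fun s : ℝ => ((s, x) : Pt)) ((1 : ℝ), (0 : V3)) t :=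
  (hasDerivAt_id t).prodMk (hasDerivAt_const t x)

lemma slice_hasDerivAt {F : Pt → ℝ} {t : ℝ} {x : V3}
    (hF : DifferentiableAt ℝ F (t, x)) :
    HasDerivAt (fun s => F (s, x)) (dt F (t, x)) t := by
  have h := hF.hasFDerivAt.comp_hasDerivAt t (line_hasDerivAt x t)
  exact h

lemma slice_dx_hasDerivAt {F : Pt → ℝ} {t : ℝ} {x : V3} (j : Fin 3)
    (hF : ContDiffAt ℝ 2 F (t, x)) :
    HasDerivAt (fun s => dx j F (s, x)) (dx j (fun w => dt F w) (t, x)) t := by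
  have hd : DifferentiableAt ℝ (fderiv ℝ F) (t, x) :=
    (hF.fderiv_right (m := 1) (le_refl 2 |>.trans_eq' (by norm_num))).differentiableAt one_ne_zero
  have hS : HasFDerivAt (fderiv ℝ F) (fderiv ℝ (fderiv ℝ F) (t, x)) (t, x) := hd.hasFDerivAt
  set S := fderiv ℝ (fderiv ℝ F) (t, x) with hSdef
  have happ : ∀ u : Pt, HasFDerivAt (fun w => fderiv ℝ F w u)
      ((ContinuousLinearMap.apply ℝ ℝ u).comp S) (t, x) := fun u => by
    have := (ContinuousLinearMap.apply ℝ ℝ u).hasFDerivAt.comp (t, x) hS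
    exact this
  have hsymm : ∀ u v : Pt, S u v = S v u := hF.isSymmSndFDerivAt (by simp)
  have e1 : dx j (fun w => dt F w) (t, x) = S ((0 : ℝ), Pi.single j 1) ((1 : ℝ), (0 : V3)) := by
    have h2 := (happ ((1 : ℝ), (0 : V3))).fderiv
    simp only [dx, dt]
    rw [h2]
    rfl
  have hmain := (happ ((0 : ℝ), Pi.single j 1)).comp_hasDerivAt t (line_hasDerivAt x t)
  have e2 : ((ContinuousLinearMap.apply ℝ ℝ ((0 : ℝ), Pi.single j 1)).comp S)
      ((1 : ℝ), (0 : V3)) = dx j (fun w => dt F w) (t, x) := by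
    rw [e1]
    exact hsymm _ _
  rw [← e2]
  exact hmain

lemma det3_hasDerivAt {M : ℝ → Matrix (Fin 3) (Fin 3) ℝ} {M' : Matrix (Fin 3) (Fin 3) ℝ}
    {t : ℝ} (h : ∀ i j, HasDerivAt (fun s => M s i j) (M' i j) t) :
    HasDerivAt (fun s => (M s).det) (∑ j, ∑ k, (M t).adjugate j k * M' k j) t := by
  have e : (fun s => (M s).det) = fun s =>
      M s 0 0 * M s 1 1 * M s 2 2 - M s 0 0 * M s 1 2 * M s 2 1
        - M s 0 1 * M s 1 0 * M s 2 2 + M s 0 1 * M s 1 2 * M s 2 0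
        + M s 0 2 * M s 1 0 * M s 2 1 - M s 0 2 * M s 1 1 * M s 2 0 := by
    funext s; exact Matrix.det_fin_three (M s)
  rw [e]
  have H := (((((((h 0 0).fun_mul (h 1 1)).fun_mul (h 2 2)).fun_sub
      (((h 0 0).fun_mul (h 1 2)).fun_mul (h 2 1))).fun_sub
      (((h 0 1).fun_mul (h 1 0)).fun_mul (h 2 2))).fun_add
      (((h 0 1).fun_mul (h 1 2)).fun_mul (h 2 0))).fun_add
      (((h 0 2).fun_mul (h 1 0)).fun_mul (h 2 1))).fun_sub
      (((h 0 2).fun_mul (h 1 1)).fun_mul (h 2 0))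
  refine H.congr_deriv (Eq.symm ?_)
  simp only [Matrix.adjugate_fin_three, Fin.sum_univ_three, Matrix.cons_val_zero,
    Matrix.cons_val_one, Matrix.head_cons, Matrix.cons_val_two, Matrix.tail_cons,
    Matrix.of_apply, Matrix.cons_val', Matrix.empty_val', Matrix.cons_val_fin_one,
    Matrix.head_fin_const]
  ring

lemma cramer3 (M : Matrix (Fin 3) (Fin 3) ℝ) (c : V3) :
    c ⬝ᵥ (crossProduct (fun i => M i 0) (fun i => M i 1)) = (M.adjugate *ᵥ c) 2 := by
  simp only [cross_apply, Matrix.adjugate_fin_three, Matrix.mulVec, dotProduct,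
    Fin.sum_univ_three, Matrix.cons_val_zero, Matrix.cons_val_one, Matrix.head_cons,
    Matrix.cons_val_two, Matrix.tail_cons, Matrix.of_apply, Matrix.cons_val',
    Matrix.empty_val', Matrix.cons_val_fin_one, Matrix.head_fin_const]
  ring

lemma eq_of_hasDerivAt_zero {I : Set ℝ} (hIc : I.OrdConnected) {f : ℝ → ℝ}
    (hf : ∀ s ∈ I, HasDerivAt f 0 s) {a b : ℝ} (ha : a ∈ I) (hb : b ∈ I) :
    f a = f b := by
  have hconv : Convex ℝ I := convex_iff_ordConnected.mpr hIc
  have h := hconv.norm_image_sub_le_of_norm_hasDerivWithin_le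
    (f' := fun _ => (0 : ℝ)) (fun s hs => (hf s hs).hasDerivWithinAt)
    (C := 0) (fun s _ => by simp) ha hb
  have : ‖f b - f a‖ ≤ 0 := by simpa using h
  have := norm_nonneg (f b - f a)
  have : f b - f a = 0 := by
    rw [← norm_eq_zero]; linarith
  linarith [this]

lemma det_smul_inv_eq_adj (M : Matrix (Fin 3) (Fin 3) ℝ) (h : IsUnit M.det) :
    M.det • M⁻¹ = M.adjugate := by
  rw [Matrix.inv_def, smul_smul, Ring.inverse_eq_inv', mul_inv_cancel₀ h.ne_zero, one_smul]

end Helpers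

/-- With `c(x) := J(t₀,x) A(t₀,x)ᵀ b(t₀,x)`, for every `(t,x) ∈ I × Ω` and
`i = 1,2,3` one has
`(b(t₀,x)·N(t₀,x)) ∂₃vᵢ(t,x) = J(t₀,x) p(t₀,x)^{1/γ} ∂ₜ(p^{-1/γ} bᵢ)(t,x) − Σ_{β=1,2} c_β(x) ∂_β vᵢ(t,x)`,
and moreover `b(t₀,x)·N(t₀,x) = c₃(x)`. -/
theorem transversal_derivative_identity
    (I : Set ℝ) (Ω : Set V3) (hI : IsOpen I) (hIc : I.OrdConnected) (hΩ : IsOpen Ω)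
    (η : Pt → V3) (hη : ContDiffOn ℝ (⊤ : ℕ∞) η (I ×ˢ Ω))
    (hinv : ∀ z ∈ I ×ˢ Ω, IsUnit (jac η z).det)
    (γ : ℝ) (hγ : γ ≠ 0)
    (hJpos : ∀ z ∈ I ×ˢ Ω, 0 < Jdet η z)
    (p : Pt → ℝ) (hp : ContDiffOn ℝ (⊤ : ℕ∞) p (I ×ˢ Ω))
    (hppos : ∀ z ∈ I ×ˢ Ω, 0 < p z)
    (hpeq : ∀ z ∈ I ×ˢ Ω, dt p z + γ * p z * divA η (vel η) z = 0)
    (b : Pt → V3) (hb : ContDiffOn ℝ (⊤ : ℕ∞) b (I ×ˢ Ω))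
    (hind : ∀ z ∈ I ×ˢ Ω, ∀ i : Fin 3,
      dt (fun w => b w i) z + b z i * divA η (vel η) z
        = ∑ k, ∑ j, b z k * Amat η z k j * dx j (fun w => vel η w i) z)
    (t₀ : ℝ) (ht₀ : t₀ ∈ I) :
    ∀ t ∈ I, ∀ x ∈ Ω, ∀ i : Fin 3,
      (b (t₀, x) ⬝ᵥ Nvec η (t₀, x)) * dx 2 (fun w => vel η w i) (t, x)
        = Jdet η (t₀, x) * p (t₀, x) ^ (1 / γ)
            * dt (fun w => p w ^ (-(1 / γ)) * b w i) (t, x)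
          - ∑ β : Fin 2,
              (Jdet η (t₀, x) • ((Amat η (t₀, x))ᵀ *ᵥ b (t₀, x))) β.castSucc
                * dx β.castSucc (fun w => vel η w i) (t, x) ∧
      b (t₀, x) ⬝ᵥ Nvec η (t₀, x)
        = (Jdet η (t₀, x) • ((Amat η (t₀, x))ᵀ *ᵥ b (t₀, x))) 2 := by
  intro t ht x hx i
  have hop : IsOpen (I ×ˢ Ω) := hI.prod hΩ
  have hmem : ∀ {s : ℝ}, s ∈ I → ((s, x) : Pt) ∈ I ×ˢ Ω := fun hs => ⟨hs, hx⟩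
  have hnh : ∀ {s : ℝ}, s ∈ I → I ×ˢ Ω ∈ 𝓝 ((s, x) : Pt) := fun hs => hop.mem_nhds (hmem hs)
  have hηc : ∀ s ∈ I, ∀ k : Fin 3, ContDiffAt ℝ 2 (fun w => η w k) (s, x) := fun s hs k =>
    ((contDiffAt_pi.mp (hη.contDiffAt (hnh hs))) k).of_le (by exact WithTop.coe_le_coe.mpr (le_top : (2 : ℕ∞) ≤ ⊤))
  have hpd : ∀ s ∈ I, DifferentiableAt ℝ p (s, x) := fun s hs =>
    (hp.contDiffAt (hnh hs)).differentiableAt (by simp)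
  have hbd : ∀ s ∈ I, ∀ k : Fin 3, DifferentiableAt ℝ (fun w => b w k) (s, x) := fun s hs k =>
    ((contDiffAt_pi.mp (hb.contDiffAt (hnh hs))) k).differentiableAt (by simp)
  have hM : ∀ s ∈ I, ∀ k j : Fin 3, HasDerivAt (fun r => jac η (r, x) k j)
      (dx j (fun w => vel η w k) (s, x)) s := fun s hs k j =>
    slice_dx_hasDerivAt j (hηc s hs k)
  have hmv : ∀ (M : Matrix (Fin 3) (Fin 3) ℝ) (v : V3) (a : Fin 3),
      (M *ᵥ v) a = ∑ k, M a k * v k := fun M v a => rfl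
  have hA : ∀ s ∈ I, ∀ a c : Fin 3, (jac η (s, x)).adjugate a c
      = Jdet η (s, x) * Amat η (s, x) c a := by
    intro s hs a c
    have h1 := congrFun (congrFun (det_smul_inv_eq_adj (jac η (s, x)) (hinv _ (hmem hs))) a) c
    simp only [Matrix.smul_apply, smul_eq_mul] at h1
    rw [← h1]
    simp [Jdet, Amat, Matrix.transpose_apply]
  have hJd : ∀ s ∈ I, HasDerivAt (fun r => Jdet η (r, x))
      (Jdet η (s, x) * divA η (vel η) (s, x)) s := by
    intro s hs
    have h1 := det3_hasDerivAt (M := fun r => jac η (r, x))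
      (M' := Matrix.of fun k j => dx j (fun w => vel η w k) (s, x)) (fun k j => hM s hs k j)
    refine h1.congr_deriv (Eq.symm ?_)
    have e1 : Jdet η (s, x) * divA η (vel η) (s, x)
        = ∑ k, ∑ j, ((jac η (s, x)).adjugate j k) * dx j (fun w => vel η w k) (s, x) := by
      simp only [divA, Finset.mul_sum]
      exact Finset.sum_congr rfl fun k _ => Finset.sum_congr rfl fun j _ => by
        rw [hA s hs j k]; ring
    rw [e1, Finset.sum_comm]
    rfl
  have hpd' : ∀ s ∈ I, HasDerivAt (fun r => p (r, x))
      (-(γ * p (s, x) * divA η (vel η) (s, x))) s := by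
    intro s hs
    have h1 := slice_hasDerivAt (hpd s hs)
    have h2 := hpeq _ (hmem hs)
    have h3 : dt p (s, x) = -(γ * p (s, x) * divA η (vel η) (s, x)) := by linarith
    rwa [h3] at h1
  have hbd' : ∀ s ∈ I, ∀ k : Fin 3, HasDerivAt (fun r => b (r, x) k)
      (-(b (s, x) k * divA η (vel η) (s, x))
        + ∑ m, ∑ j, b (s, x) m * Amat η (s, x) m j * dx j (fun w => vel η w k) (s, x)) s := by
    intro s hs k
    have h1 := slice_hasDerivAt (F := fun w => b w k) (hbd s hs k)
    have h2 := hind _ (hmem hs) k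
    have h3 : dt (fun w => b w k) (s, x) = -(b (s, x) k * divA η (vel η) (s, x))
        + ∑ m, ∑ j, b (s, x) m * Amat η (s, x) m j * dx j (fun w => vel η w k) (s, x) := by
      linarith
    rwa [h3] at h1
  have hsum_eq : ∀ s ∈ I, ∀ k : Fin 3,
      Jdet η (s, x) * (∑ m, ∑ j, b (s, x) m * Amat η (s, x) m j
          * dx j (fun w => vel η w k) (s, x))
        = ∑ j, ((jac η (s, x)).adjugate *ᵥ b (s, x)) j * dx j (fun w => vel η w k) (s, x) := by
    intro s hs k
    simp only [hmv, Finset.mul_sum, Finset.sum_mul]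
    rw [Finset.sum_comm]
    refine Finset.sum_congr rfl fun j _ => Finset.sum_congr rfl fun m _ => ?_
    rw [hA s hs j m]; ring
  have hMG : ∀ (r : ℝ) (i' : Fin 3),
      (∑ k, jac η (r, x) i' k * ((jac η (r, x)).adjugate *ᵥ b (r, x)) k)
        = Jdet η (r, x) * b (r, x) i' := by
    intro r i'
    have h1 : (jac η (r, x) *ᵥ ((jac η (r, x)).adjugate *ᵥ b (r, x))) i'
        = (Jdet η (r, x) • b (r, x)) i' := by
      rw [Matrix.mulVec_mulVec, Matrix.mul_adjugate, Matrix.smul_mulVec,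
        Matrix.one_mulVec]
      rfl
    rw [← hmv]
    rw [h1]
    rfl
  have hGzero : ∀ s ∈ I, ∀ jj : Fin 3,
      HasDerivAt (fun r => ((jac η (r, x)).adjugate *ᵥ b (r, x)) jj) 0 s := by
    intro s hs jj
    have hex : ∀ jj : Fin 3, ∃ g : ℝ,
        HasDerivAt (fun r => ((jac η (r, x)).adjugate *ᵥ b (r, x)) jj) g s := by
      intro jj
      have hrw : (fun r => ((jac η (r, x)).adjugate *ᵥ b (r, x)) jj)
          = fun r => ((jac η (r, x)).updateCol jj (b (r, x))).det := by
        funext r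
        rw [← Matrix.cramer_eq_adjugate_mulVec, Matrix.cramer_apply]
      have hU : ∀ a c : Fin 3, HasDerivAt
          (fun r => (jac η (r, x)).updateCol jj (b (r, x)) a c)
          ((Matrix.of fun a c => if c = jj then
              (-(b (s, x) a * divA η (vel η) (s, x))
                + ∑ m, ∑ j, b (s, x) m * Amat η (s, x) m j
                    * dx j (fun w => vel η w a) (s, x))
            else dx c (fun w => vel η w a) (s, x)) a c) s := by
        intro a c
        simp only [Matrix.updateCol_apply, Matrix.of_apply]
        by_cases hc : c = jj
        · simp only [hc, if_pos rfl]
          exact hbd' s hs a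
        · simp only [if_neg hc]
          exact hM s hs a c
      exact ⟨_, hrw ▸ det3_hasDerivAt hU⟩
    choose gv hgv using hex
    have hcomb : ∀ i' : Fin 3,
        (∑ k, (dx k (fun w => vel η w i') (s, x)
            * ((jac η (s, x)).adjugate *ᵥ b (s, x)) k
          + jac η (s, x) i' k * gv k))
        = Jdet η (s, x) * divA η (vel η) (s, x) * b (s, x) i'
          + Jdet η (s, x) * (-(b (s, x) i' * divA η (vel η) (s, x))
            + ∑ m, ∑ j, b (s, x) m * Amat η (s, x) m j
                * dx j (fun w => vel η w i') (s, x)) := by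
      intro i'
      have h1 : HasDerivAt
          (fun r => ∑ k, jac η (r, x) i' k * ((jac η (r, x)).adjugate *ᵥ b (r, x)) k)
          (∑ k, (dx k (fun w => vel η w i') (s, x)
              * ((jac η (s, x)).adjugate *ᵥ b (s, x)) k
            + jac η (s, x) i' k * gv k)) s :=
        HasDerivAt.fun_sum fun k _ => (hM s hs i' k).fun_mul (hgv k)
      have h2 : HasDerivAt (fun r => Jdet η (r, x) * b (r, x) i')
          (Jdet η (s, x) * divA η (vel η) (s, x) * b (s, x) i'
            + Jdet η (s, x) * (-(b (s, x) i' * divA η (vel η) (s, x))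
              + ∑ m, ∑ j, b (s, x) m * Amat η (s, x) m j
                  * dx j (fun w => vel η w i') (s, x))) s :=
        (hJd s hs).fun_mul (hbd' s hs i')
      have hfe : (fun r => ∑ k, jac η (r, x) i' k * ((jac η (r, x)).adjugate *ᵥ b (r, x)) k)
          = fun r => Jdet η (r, x) * b (r, x) i' := funext fun r => hMG r i'
      rw [hfe] at h1
      exact h1.unique h2
    have hgzero : ∀ k, gv k = 0 := by
      have hMg : ∀ i', (∑ k, jac η (s, x) i' k * gv k) = 0 := by
        intro i'
        have h3 := hcomb i'
        rw [Finset.sum_add_distrib] at h3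
        have h4 := hsum_eq s hs i'
        have h5 : (∑ k, dx k (fun w => vel η w i') (s, x)
              * ((jac η (s, x)).adjugate *ᵥ b (s, x)) k)
            = ∑ k, ((jac η (s, x)).adjugate *ᵥ b (s, x)) k
                * dx k (fun w => vel η w i') (s, x) :=
          Finset.sum_congr rfl fun k _ => mul_comm _ _
        rw [h5, ← h4] at h3
        ring_nf at h3
        linarith
      have hvec : jac η (s, x) *ᵥ gv = 0 := funext fun i' => by
        rw [hmv]; exact hMg i'
      have h6 : ((jac η (s, x))⁻¹ * jac η (s, x)) *ᵥ gv = gv := by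
        rw [Matrix.nonsing_inv_mul _ (hinv _ (hmem hs)), Matrix.one_mulVec]
      rw [← Matrix.mulVec_mulVec, hvec, Matrix.mulVec_zero] at h6
      intro k
      rw [← h6]
      rfl
    have h7 := hgv jj
    rwa [hgzero jj] at h7
  have hFzero : ∀ s ∈ I, HasDerivAt (fun r => Jdet η (r, x) * p (r, x) ^ (1 / γ)) 0 s := by
    intro s hs
    have hpne : p (s, x) ≠ 0 := ne_of_gt (hppos _ (hmem hs))
    have hrp := (hpd' s hs).rpow_const (p := 1 / γ) (Or.inl hpne)
    have h1 := (hJd s hs).fun_mul hrp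
    refine h1.congr_deriv (Eq.symm ?_)
    have key : p (s, x) ^ (1 / γ - 1) * p (s, x) = p (s, x) ^ (1 / γ) := by
      rw [← Real.rpow_add_one hpne]; norm_num
    have key2 : (1 / γ) * γ = 1 := by field_simp
    linear_combination ((1 / γ) * γ * Jdet η (s, x) * divA η (vel η) (s, x)) * key
      + (Jdet η (s, x) * divA η (vel η) (s, x) * p (s, x) ^ (1 / γ)) * key2
  have hGconst : ∀ jj : Fin 3, ((jac η (t, x)).adjugate *ᵥ b (t, x)) jj
      = ((jac η (t₀, x)).adjugate *ᵥ b (t₀, x)) jj := fun jj =>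
    eq_of_hasDerivAt_zero hIc (fun s hs => hGzero s hs jj) ht ht₀
  have hFconst : Jdet η (t, x) * p (t, x) ^ (1 / γ)
      = Jdet η (t₀, x) * p (t₀, x) ^ (1 / γ) :=
    eq_of_hasDerivAt_zero hIc hFzero ht ht₀
  have hpne_t : p (t, x) ≠ 0 := ne_of_gt (hppos _ (hmem ht))
  have hFb := (((hpd t ht).hasFDerivAt.rpow_const (p := -(1 / γ)) (Or.inl hpne_t)).fun_mul
    ((hbd t ht i).hasFDerivAt))
  have hdtv : dt (fun w => p w ^ (-(1 / γ)) * b w i) (t, x)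
      = p (t, x) ^ (-(1 / γ)) * dt (fun w => b w i) (t, x)
        + b (t, x) i * (-(1 / γ) * p (t, x) ^ (-(1 / γ) - 1) * dt p (t, x)) := by
    rw [dt, hFb.fderiv]
    simp only [ContinuousLinearMap.add_apply, ContinuousLinearMap.coe_smul',
      Pi.smul_apply, smul_eq_mul, dt]
  have hdt2 : dt (fun w => p w ^ (-(1 / γ)) * b w i) (t, x)
      = p (t, x) ^ (-(1 / γ)) * (∑ m, ∑ j, b (t, x) m * Amat η (t, x) m j
          * dx j (fun w => vel η w i) (t, x)) := by
    have h2 := hpeq _ (hmem ht)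
    have h3 := hind _ (hmem ht) i
    have e2 : dt p (t, x) = -(γ * p (t, x) * divA η (vel η) (t, x)) := by linarith
    have e3 : dt (fun w => b w i) (t, x) = -(b (t, x) i * divA η (vel η) (t, x))
        + ∑ m, ∑ j, b (t, x) m * Amat η (t, x) m j * dx j (fun w => vel η w i) (t, x) := by
      linarith
    rw [hdtv, e2, e3]
    have key : p (t, x) ^ (-(1 / γ) - 1) * p (t, x) = p (t, x) ^ (-(1 / γ)) := by
      rw [← Real.rpow_add_one hpne_t]; norm_num
    have key2 : (1 / γ) * γ = 1 := by field_simp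
    linear_combination ((1 / γ) * γ * b (t, x) i * divA η (vel η) (t, x)) * key
      + (b (t, x) i * divA η (vel η) (t, x) * p (t, x) ^ (-(1 / γ))) * key2
  have hmain1 : Jdet η (t₀, x) * p (t₀, x) ^ (1 / γ)
        * dt (fun w => p w ^ (-(1 / γ)) * b w i) (t, x)
      = ∑ j, ((jac η (t₀, x)).adjugate *ᵥ b (t₀, x)) j
          * dx j (fun w => vel η w i) (t, x) := by
    rw [hdt2, ← hFconst]
    have hcan : p (t, x) ^ (1 / γ) * p (t, x) ^ (-(1 / γ)) = 1 := by
      rw [← Real.rpow_add (hppos _ (hmem ht))]; simp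
    have h4 := hsum_eq t ht i
    calc Jdet η (t, x) * p (t, x) ^ (1 / γ)
          * (p (t, x) ^ (-(1 / γ)) * (∑ m, ∑ j, b (t, x) m * Amat η (t, x) m j
              * dx j (fun w => vel η w i) (t, x)))
        = (p (t, x) ^ (1 / γ) * p (t, x) ^ (-(1 / γ)))
            * (Jdet η (t, x) * (∑ m, ∑ j, b (t, x) m * Amat η (t, x) m j
              * dx j (fun w => vel η w i) (t, x))) := by ring
      _ = Jdet η (t, x) * (∑ m, ∑ j, b (t, x) m * Amat η (t, x) m j
              * dx j (fun w => vel η w i) (t, x)) := by rw [hcan, one_mul]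
      _ = ∑ j, ((jac η (t, x)).adjugate *ᵥ b (t, x)) j
            * dx j (fun w => vel η w i) (t, x) := h4
      _ = ∑ j, ((jac η (t₀, x)).adjugate *ᵥ b (t₀, x)) j
            * dx j (fun w => vel η w i) (t, x) :=
        Finset.sum_congr rfl fun j _ => by rw [hGconst j]
  have hc : (Jdet η (t₀, x) • ((Amat η (t₀, x))ᵀ *ᵥ b (t₀, x)))
      = (jac η (t₀, x)).adjugate *ᵥ b (t₀, x) := by
    simp only [Amat, Matrix.transpose_transpose]
    rw [← Matrix.smul_mulVec,
      show Jdet η (t₀, x) • (jac η (t₀, x))⁻¹ = (jac η (t₀, x)).adjugate from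
        det_smul_inv_eq_adj _ (hinv _ (hmem ht₀))]
  have hcram : b (t₀, x) ⬝ᵥ Nvec η (t₀, x)
      = ((jac η (t₀, x)).adjugate *ᵥ b (t₀, x)) 2 := by
    simpa [Nvec] using cramer3 (jac η (t₀, x)) (b (t₀, x))
  constructor
  · rw [hcram, hmain1, hc]
    rw [Fin.sum_univ_castSucc (f := fun j => ((jac η (t₀, x)).adjugate *ᵥ b (t₀, x)) j
        * dx j (fun w => vel η w i) (t, x))]
    have hlast : (Fin.last 2 : Fin 3) = 2 := rfl
    rw [hlast]
    ring
  · rw [hcram, hc]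
end
end

section
/- Assume: (i) for each σ ∈ {+,−}, the equations ∂_t η^σ = v^σ, ∂_t p^σ + γ p^σ div_{A^σ} v^σ = 0, and ∂_t b^σ + b^σ div_{A^σ} v^σ = (b^σ·∇_{A^σ}) v^σ hold on I × U^σ; (ii) for every t ∈ I and x ∈ Σ₀: p⁺(t,x) = p⁻(t,x), v⁺(t,x) = v⁻(t,x), and b⁺(t,x) = b⁻(t,x); (iii) at t = 0, η⁺(0,x) = η⁻(0,x) and ∂₃η⁺(0,x) = ∂₃η⁻(0,x) for all x ∈ Σ₀; (iv) b⁺(0,x) · N⁺(0,x) ≠ 0 for every x ∈ Σ₀. Then for every t ∈ I and x ∈ Σ₀: ∂₃v⁺(t,x) = ∂₃v⁻(t,x), η⁺(t,x) = η⁻(t,x), and ∂₃η⁺(t,x) = ∂₃η⁻(t,x). -/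
noncomputable section

open Matrix Set

open Filter Topology

section AuxLemmas

/-- Differentiability at an interior point from smoothness on an open set. -/
private lemma aux_diffAt {F : Pt → ℝ} {O : Set Pt} (hO : IsOpen O) (hF : ContDiffOn ℝ (⊤ : ℕ∞) F O)
    {z : Pt} (hz : z ∈ O) : DifferentiableAt ℝ F z :=
  (hF.differentiableOn (by simp)).differentiableAt (hO.mem_nhds hz)

/-- The map `z ↦ fderiv F z u` is smooth on an open set where `F` is smooth. -/
private lemma aux_smooth_deriv {F : Pt → ℝ} {O : Set Pt} (hO : IsOpen O)
    (hF : ContDiffOn ℝ (⊤ : ℕ∞) F O) (u : Pt) :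
    ContDiffOn ℝ (⊤ : ℕ∞) (fun z => fderiv ℝ F z u) O :=
  (hF.fderiv_of_isOpen hO (by simp)).clm_apply contDiffOn_const

private lemma aux_cont_deriv {F : Pt → ℝ} {O : Set Pt} (hO : IsOpen O)
    (hF : ContDiffOn ℝ (⊤ : ℕ∞) F O) (u : Pt) :
    ContinuousOn (fun z => fderiv ℝ F z u) O :=
  ((aux_smooth_deriv hO hF u).continuousOn)

/-- Slice along time: derivative of `t ↦ G (t, x)`. -/
private lemma aux_slice_t {G : Pt → ℝ} {z : Pt} (hd : DifferentiableAt ℝ G z) :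
    HasDerivAt (fun t => G (t, z.2)) (fderiv ℝ G z ((1 : ℝ), (0 : V3))) z.1 := by
  have h1 : HasDerivAt (fun t : ℝ => (t, z.2)) ((1 : ℝ), (0 : V3)) z.1 :=
    HasDerivAt.prodMk (hasDerivAt_id z.1) (hasDerivAt_const _ _)
  have h2 : HasFDerivAt G (fderiv ℝ G z) (z.1, z.2) := by
    rw [Prod.mk.eta]; exact hd.hasFDerivAt
  exact h2.comp_hasDerivAt z.1 h1

/-- One-sided vanishing along a ray gives vanishing directional derivative. -/
private lemma aux_dir_deriv_zero {G : Pt → ℝ} {z : Pt} (hd : DifferentiableAt ℝ G z) (w : Pt)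
    (h0 : G z = 0) (h : ∀ᶠ s in 𝓝[>] (0 : ℝ), G (z + s • w) = 0) :
    fderiv ℝ G z w = 0 := by
  have hline : HasDerivAt (fun s : ℝ => z + s • w) w 0 := by
    simpa using ((hasDerivAt_id (0 : ℝ)).smul_const w).const_add z
  have hφ : HasDerivAt (fun s : ℝ => G (z + s • w)) (fderiv ℝ G z w) 0 := by
    have h2 : HasFDerivAt G (fderiv ℝ G z) (z + (0 : ℝ) • w) := by
      simpa using hd.hasFDerivAt
    exact h2.comp_hasDerivAt 0 hline
  have hφ' : HasDerivWithinAt (fun _ : ℝ => (0 : ℝ)) (fderiv ℝ G z w) (Ioi 0) 0 := by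
    refine (hφ.hasDerivWithinAt.congr_of_eventuallyEq ?_ ?_)
    · filter_upwards [h] with s hs; simpa using hs.symm
    · simpa using h0.symm
  have h2 : HasDerivWithinAt (fun _ : ℝ => (0 : ℝ)) 0 (Ioi 0) 0 :=
    (hasDerivAt_const _ _).hasDerivWithinAt
  have e1 := hφ'.derivWithin (uniqueDiffWithinAt_Ioi 0)
  have e2 := h2.derivWithin (uniqueDiffWithinAt_Ioi 0)
  rw [← e1, e2]

/-- Boundary extension: a continuous function vanishing on the open upper half
vanishes on the interface. -/
private lemma aux_ext_plus {E : Pt → ℝ} {O : Set Pt} (hO : IsOpen O) (hE : ContinuousOn E O)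
    {z : Pt} (hz : z ∈ O) (hz2 : z.2 2 = 0)
    (h : ∀ w ∈ O, 0 < w.2 2 → E w = 0) : E z = 0 := by
  set w : Pt := ((0 : ℝ), (Pi.single 2 1 : V3)) with hw
  have hpath : Tendsto (fun s : ℝ => z + s • w) (𝓝[>] 0) (𝓝 z) := by
    have hc : Continuous (fun s : ℝ => z + s • w) := by continuity
    have := hc.tendsto 0
    simp only [zero_smul, add_zero] at this
    exact this.mono_left nhdsWithin_le_nhds
  have hEz : Tendsto (fun s : ℝ => E (z + s • w)) (𝓝[>] 0) (𝓝 (E z)) :=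
    (hE.continuousAt (hO.mem_nhds hz)).tendsto.comp hpath
  have hev : ∀ᶠ s in 𝓝[>] (0 : ℝ), E (z + s • w) = 0 := by
    filter_upwards [hpath.eventually (hO.mem_nhds hz), self_mem_nhdsWithin] with s hsO hs
    refine h _ hsO ?_
    have : (z + s • w).2 2 = z.2 2 + s * 1 := by
      simp [hw, Pi.single_eq_same]
    rw [this, hz2, zero_add, mul_one]; exact hs
  have : Tendsto (fun s : ℝ => E (z + s • w)) (𝓝[>] 0) (𝓝 0) :=
    Tendsto.congr' (by filter_upwards [hev] with s hs using hs.symm) tendsto_const_nhds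
  exact tendsto_nhds_unique hEz this

/-- Same for the lower half. -/
private lemma aux_ext_minus {E : Pt → ℝ} {O : Set Pt} (hO : IsOpen O) (hE : ContinuousOn E O)
    {z : Pt} (hz : z ∈ O) (hz2 : z.2 2 = 0)
    (h : ∀ w ∈ O, w.2 2 < 0 → E w = 0) : E z = 0 := by
  set w : Pt := ((0 : ℝ), (-Pi.single 2 1 : V3)) with hw
  have hpath : Tendsto (fun s : ℝ => z + s • w) (𝓝[>] 0) (𝓝 z) := by
    have hc : Continuous (fun s : ℝ => z + s • w) := by continuity
    have := hc.tendsto 0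
    simp only [zero_smul, add_zero] at this
    exact this.mono_left nhdsWithin_le_nhds
  have hEz : Tendsto (fun s : ℝ => E (z + s • w)) (𝓝[>] 0) (𝓝 (E z)) :=
    (hE.continuousAt (hO.mem_nhds hz)).tendsto.comp hpath
  have hev : ∀ᶠ s in 𝓝[>] (0 : ℝ), E (z + s • w) = 0 := by
    filter_upwards [hpath.eventually (hO.mem_nhds hz), self_mem_nhdsWithin] with s hsO hs
    refine h _ hsO ?_
    have : (z + s • w).2 2 = z.2 2 + s * (-1) := by
      simp [hw, Pi.single_eq_same]
    rw [this, hz2, zero_add]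
    simpa using (mem_Ioi.mp hs)
  have : Tendsto (fun s : ℝ => E (z + s • w)) (𝓝[>] 0) (𝓝 0) :=
    Tendsto.congr' (by filter_upwards [hev] with s hs using hs.symm) tendsto_const_nhds
  exact tendsto_nhds_unique hEz this

/-- Symmetry of second derivatives for a smooth function on an open set. -/
private lemma aux_second_symm {F : Pt → ℝ} {O : Set Pt} (hO : IsOpen O)
    (hF : ContDiffOn ℝ (⊤ : ℕ∞) F O) {z : Pt} (hz : z ∈ O) (u w : Pt) :
    fderiv ℝ (fun y => fderiv ℝ F y u) z w = fderiv ℝ (fun y => fderiv ℝ F y w) z u := by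
  have hF' : ContDiffOn ℝ (⊤ : ℕ∞) (fderiv ℝ F) O := hF.fderiv_of_isOpen hO (by simp)
  have hd : DifferentiableAt ℝ (fderiv ℝ F) z :=
    (hF'.differentiableOn (by simp)).differentiableAt (hO.mem_nhds hz)
  have hev : ∀ᶠ y in 𝓝 z, HasFDerivAt F (fderiv ℝ F y) y := by
    filter_upwards [hO.mem_nhds hz] with y hy
    exact (aux_diffAt hO hF hy).hasFDerivAt
  have hsymm := second_derivative_symmetric_of_eventually hev hd.hasFDerivAt u w
  have h1 : ∀ v : Pt, HasFDerivAt (fun y => fderiv ℝ F y v)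
      ((ContinuousLinearMap.apply ℝ ℝ v).comp (fderiv ℝ (fderiv ℝ F) z)) z := fun v =>
    (ContinuousLinearMap.apply ℝ ℝ v).hasFDerivAt.comp z hd.hasFDerivAt
  rw [(h1 u).fderiv, (h1 w).fderiv]
  simpa using hsymm.symm

/-- A function with zero derivative on an open convex set is constant there. -/
private lemma aux_const {I : Set ℝ} (hI : IsOpen I) (hc : Convex ℝ I) {f : ℝ → ℝ}
    (hf : ∀ t ∈ I, HasDerivAt f 0 t) {a b : ℝ} (ha : a ∈ I) (hb : b ∈ I) : f a = f b := by
  refine hc.is_const_of_fderivWithin_eq_zero (𝕜 := ℝ)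
    (fun t ht => ((hf t ht).differentiableAt).differentiableWithinAt) (fun t ht => ?_) ha hb
  rw [fderivWithin_of_isOpen hI ht]
  have := (hf t ht).hasFDerivAt.fderiv
  rw [this]; ext; simp

end AuxLemmas
private lemma conservation_key (m00 m01 m02 m10 m11 m12 m20 m21 m22 d00 d01 d02 d10 d11 d12 d20 d21 d22 b0 b1 b2 : ℝ)
    (hJ : m00 * m11 * m22 - m00 * m12 * m21 - m01 * m10 * m22 + m01 * m12 * m20 + m02 * m10 * m21 - m02 * m11 * m20 ≠ 0) :
    (((b0 * ((m00 * m11 * m22 - m00 * m12 * m21 - m01 * m10 * m22 + m01 * m12 * m20 + m02 * m10 * m21 - m02 * m11 * m20)⁻¹ * ((m11*m22 - m12*m21))) * d00 + b0 * ((m00 * m11 * m22 - m00 * m12 * m21 - m01 * m10 * m22 + m01 * m12 * m20 + m02 * m10 * m21 - m02 * m11 * m20)⁻¹ * (-(m10*m22 - m12*m20))) * d01 + b0 * ((m00 * m11 * m22 - m00 * m12 * m21 - m01 * m10 * m22 + m01 * m12 * m20 + m02 * m10 * m21 - m02 * m11 * m20)⁻¹ * ((m10*m21 - m11*m20))) *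 d02 + b1 * ((m00 * m11 * m22 - m00 * m12 * m21 - m01 * m10 * m22 + m01 * m12 * m20 + m02 * m10 * m21 - m02 * m11 * m20)⁻¹ * (-(m01*m22 - m02*m21))) * d00 + b1 * ((m00 * m11 * m22 - m00 * m12 * m21 - m01 * m10 * m22 + m01 * m12 * m20 + m02 * m10 * m21 - m02 * m11 * m20)⁻¹ * ((m00*m22 - m02*m20))) * d01 + b1 * ((m00 * m11 * m22 - m00 * m12 * m21 - m01 * m10 * m22 + m01 * m12 * m20 + m02 * m10 * m21 - m02 * m11 * m20)⁻¹ * (-(m00*m21 - m01*m20))) * d02 + b2 * ((m00 * m11 * m22 - m00 * m12 * m21 - m01 * m10 * m22 + m01 * m12 * m20 + m02 * m10 * m21 - m02 * m11 * m20)⁻¹ * ((m01*m12 - m02*m11))) * d00 + b2 * ((m00 * m11 * m22 - m00 * m12 * m21 - m01 * m10 * m22 + m01 * m12 * m20 + m02 * m10 * m21 - m02 * m11 * m20)⁻¹ * (-(m00*m12 - m02*m10))) * d01 + b2 * ((m00 * m11 * m22 - m00 * m12 * m21 - m01 * m10 * m22 + m01 * m12 * m20 + m02 * m10 * m21 - m02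 * m11 * m20)⁻¹ * ((m00*m11 - m01*m10))) * d02) - b0 * (((m00 * m11 * m22 - m00 * m12 * m21 - m01 * m10 * m22 + m01 * m12 * m20 + m02 * m10 * m21 - m02 * m11 * m20)⁻¹ * ((m11*m22 - m12*m21))) * d00 + ((m00 * m11 * m22 - m00 * m12 * m21 - m01 * m10 * m22 + m01 * m12 * m20 + m02 * m10 * m21 - m02 * m11 * m20)⁻¹ * (-(m10*m22 - m12*m20))) * d01 + ((m00 * m11 * m22 - m00 * m12 * m21 - m01 * m10 * m22 + m01 * m12 * m20 + m02 * m10 * m21 - m02 * m11 * m20)⁻¹ * ((m10*m21 - m11*m20))) * d02 + ((m00 * m11 * m22 - m00 * m12 * m21 - m01 * m10 * m22 + m01 * m12 * m20 + m02 * m10 * m21 - m02 * m11 * m20)⁻¹ * (-(m01*m22 - m02*m21))) * d10 + ((m00 * m11 * m22 - m00 * m12 * m21 - m01 * m10 * m22 + m01 * m12 * m20 + m02 * m10 * m21 - m02 * m11 * m20)⁻¹ * ((m00*m22 - m02*m20))) * d11 + ((m00 * m11 * m22 - m00 * m12 * m21 - m01 * m10 * m22 + m01 * m12 * m20 + m02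 * m10 * m21 - m02 * m11 * m20)⁻¹ * (-(m00*m21 - m01*m20))) * d12 + ((m00 * m11 * m22 - m00 * m12 * m21 - m01 * m10 * m22 + m01 * m12 * m20 + m02 * m10 * m21 - m02 * m11 * m20)⁻¹ * ((m01*m12 - m02*m11))) * d20 + ((m00 * m11 * m22 - m00 * m12 * m21 - m01 * m10 * m22 + m01 * m12 * m20 + m02 * m10 * m21 - m02 * m11 * m20)⁻¹ * (-(m00*m12 - m02*m10))) * d21 + ((m00 * m11 * m22 - m00 * m12 * m21 - m01 * m10 * m22 + m01 * m12 * m20 + m02 * m10 * m21 - m02 * m11 * m20)⁻¹ * ((m00*m11 - m01*m10))) * d22)) * (m10*m21 - m20*m11) + b0 * ((d10*m21 - d20*m11) + (m10*d21 - m20*d11))) + (((b0 * ((m00 * m11 * m22 - m00 * m12 * m21 - m01 * m10 * m22 + m01 * m12 * m20 + m02 * m10 * m21 - m02 * m11 * m20)⁻¹ * ((m11*m22 - m12*m21))) * d10 + b0 * ((m00 * m11 * m22 - m00 * m12 * m21 - m01 * m10 * m22 + m01 * m12 * m20 + m02 * m10 * m21 - m02 * m11 * m20)⁻¹ * (-(m10*m22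 - m12*m20))) * d11 + b0 * ((m00 * m11 * m22 - m00 * m12 * m21 - m01 * m10 * m22 + m01 * m12 * m20 + m02 * m10 * m21 - m02 * m11 * m20)⁻¹ * ((m10*m21 - m11*m20))) * d12 + b1 * ((m00 * m11 * m22 - m00 * m12 * m21 - m01 * m10 * m22 + m01 * m12 * m20 + m02 * m10 * m21 - m02 * m11 * m20)⁻¹ * (-(m01*m22 - m02*m21))) * d10 + b1 * ((m00 * m11 * m22 - m00 * m12 * m21 - m01 * m10 * m22 + m01 * m12 * m20 + m02 * m10 * m21 - m02 * m11 * m20)⁻¹ * ((m00*m22 - m02*m20))) * d11 + b1 * ((m00 * m11 * m22 - m00 * m12 * m21 - m01 * m10 * m22 + m01 * m12 * m20 + m02 * m10 * m21 - m02 * m11 * m20)⁻¹ * (-(m00*m21 - m01*m20))) * d12 + b2 * ((m00 * m11 * m22 - m00 * m12 * m21 - m01 * m10 * m22 + m01 * m12 * m20 + m02 * m10 * m21 - m02 * m11 * m20)⁻¹ * ((m01*m12 - m02*m11))) * d10 + b2 * ((m00 * m11 * m22 - m00 * m12 * m21 - m01 * m10 * m22 + m01 * m12 * m20 + m02 * m10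 * m21 - m02 * m11 * m20)⁻¹ * (-(m00*m12 - m02*m10))) * d11 + b2 * ((m00 * m11 * m22 - m00 * m12 * m21 - m01 * m10 * m22 + m01 * m12 * m20 + m02 * m10 * m21 - m02 * m11 * m20)⁻¹ * ((m00*m11 - m01*m10))) * d12) - b1 * (((m00 * m11 * m22 - m00 * m12 * m21 - m01 * m10 * m22 + m01 * m12 * m20 + m02 * m10 * m21 - m02 * m11 * m20)⁻¹ * ((m11*m22 - m12*m21))) * d00 + ((m00 * m11 * m22 - m00 * m12 * m21 - m01 * m10 * m22 + m01 * m12 * m20 + m02 * m10 * m21 - m02 * m11 * m20)⁻¹ * (-(m10*m22 - m12*m20))) * d01 + ((m00 * m11 * m22 - m00 * m12 * m21 - m01 * m10 * m22 + m01 * m12 * m20 + m02 * m10 * m21 - m02 * m11 * m20)⁻¹ * ((m10*m21 - m11*m20))) * d02 + ((m00 * m11 * m22 - m00 * m12 * m21 - m01 * m10 * m22 + m01 * m12 * m20 + m02 * m10 * m21 - m02 * m11 * m20)⁻¹ * (-(m01*m22 - m02*m21))) * d10 + ((m00 * m11 * m22 - m00 * m12 * m21 - m01 * m10 * m22 + m01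 * m12 * m20 + m02 * m10 * m21 - m02 * m11 * m20)⁻¹ * ((m00*m22 - m02*m20))) * d11 + ((m00 * m11 * m22 - m00 * m12 * m21 - m01 * m10 * m22 + m01 * m12 * m20 + m02 * m10 * m21 - m02 * m11 * m20)⁻¹ * (-(m00*m21 - m01*m20))) * d12 + ((m00 * m11 * m22 - m00 * m12 * m21 - m01 * m10 * m22 + m01 * m12 * m20 + m02 * m10 * m21 - m02 * m11 * m20)⁻¹ * ((m01*m12 - m02*m11))) * d20 + ((m00 * m11 * m22 - m00 * m12 * m21 - m01 * m10 * m22 + m01 * m12 * m20 + m02 * m10 * m21 - m02 * m11 * m20)⁻¹ * (-(m00*m12 - m02*m10))) * d21 + ((m00 * m11 * m22 - m00 * m12 * m21 - m01 * m10 * m22 + m01 * m12 * m20 + m02 * m10 * m21 - m02 * m11 * m20)⁻¹ * ((m00*m11 - m01*m10))) * d22)) * (m20*m01 - m00*m21) + b1 * ((d20*m01 - d00*m21) + (m20*d01 - m00*d21))) + (((b0 * ((m00 * m11 * m22 - m00 * m12 * m21 - m01 * m10 * m22 + m01 * m12 * m20 + m02 * m10 * m21 - m02 * m11 * m20)⁻¹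 * ((m11*m22 - m12*m21))) * d20 + b0 * ((m00 * m11 * m22 - m00 * m12 * m21 - m01 * m10 * m22 + m01 * m12 * m20 + m02 * m10 * m21 - m02 * m11 * m20)⁻¹ * (-(m10*m22 - m12*m20))) * d21 + b0 * ((m00 * m11 * m22 - m00 * m12 * m21 - m01 * m10 * m22 + m01 * m12 * m20 + m02 * m10 * m21 - m02 * m11 * m20)⁻¹ * ((m10*m21 - m11*m20))) * d22 + b1 * ((m00 * m11 * m22 - m00 * m12 * m21 - m01 * m10 * m22 + m01 * m12 * m20 + m02 * m10 * m21 - m02 * m11 * m20)⁻¹ * (-(m01*m22 - m02*m21))) * d20 + b1 * ((m00 * m11 * m22 - m00 * m12 * m21 - m01 * m10 * m22 + m01 * m12 * m20 + m02 * m10 * m21 - m02 * m11 * m20)⁻¹ * ((m00*m22 - m02*m20))) * d21 + b1 * ((m00 * m11 * m22 - m00 * m12 * m21 - m01 * m10 * m22 + m01 * m12 * m20 + m02 * m10 * m21 - m02 * m11 * m20)⁻¹ * (-(m00*m21 - m01*m20))) * d22 + b2 * ((m00 * m11 * m22 - m00 * m12 * m21 - m01 * m10 * m22 + m01 * m12 *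 m20 + m02 * m10 * m21 - m02 * m11 * m20)⁻¹ * ((m01*m12 - m02*m11))) * d20 + b2 * ((m00 * m11 * m22 - m00 * m12 * m21 - m01 * m10 * m22 + m01 * m12 * m20 + m02 * m10 * m21 - m02 * m11 * m20)⁻¹ * (-(m00*m12 - m02*m10))) * d21 + b2 * ((m00 * m11 * m22 - m00 * m12 * m21 - m01 * m10 * m22 + m01 * m12 * m20 + m02 * m10 * m21 - m02 * m11 * m20)⁻¹ * ((m00*m11 - m01*m10))) * d22) - b2 * (((m00 * m11 * m22 - m00 * m12 * m21 - m01 * m10 * m22 + m01 * m12 * m20 + m02 * m10 * m21 - m02 * m11 * m20)⁻¹ * ((m11*m22 - m12*m21))) * d00 + ((m00 * m11 * m22 - m00 * m12 * m21 - m01 * m10 * m22 + m01 * m12 * m20 + m02 * m10 * m21 - m02 * m11 * m20)⁻¹ * (-(m10*m22 - m12*m20))) * d01 + ((m00 * m11 * m22 - m00 * m12 * m21 - m01 * m10 * m22 + m01 * m12 * m20 + m02 * m10 * m21 - m02 * m11 * m20)⁻¹ * ((m10*m21 - m11*m20))) * d02 + ((m00 * m11 * m22 - m00 * m12 * m21 -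 m01 * m10 * m22 + m01 * m12 * m20 + m02 * m10 * m21 - m02 * m11 * m20)⁻¹ * (-(m01*m22 - m02*m21))) * d10 + ((m00 * m11 * m22 - m00 * m12 * m21 - m01 * m10 * m22 + m01 * m12 * m20 + m02 * m10 * m21 - m02 * m11 * m20)⁻¹ * ((m00*m22 - m02*m20))) * d11 + ((m00 * m11 * m22 - m00 * m12 * m21 - m01 * m10 * m22 + m01 * m12 * m20 + m02 * m10 * m21 - m02 * m11 * m20)⁻¹ * (-(m00*m21 - m01*m20))) * d12 + ((m00 * m11 * m22 - m00 * m12 * m21 - m01 * m10 * m22 + m01 * m12 * m20 + m02 * m10 * m21 - m02 * m11 * m20)⁻¹ * ((m01*m12 - m02*m11))) * d20 + ((m00 * m11 * m22 - m00 * m12 * m21 - m01 * m10 * m22 + m01 * m12 * m20 + m02 * m10 * m21 - m02 * m11 * m20)⁻¹ * (-(m00*m12 - m02*m10))) * d21 + ((m00 * m11 * m22 - m00 * m12 * m21 - m01 * m10 * m22 + m01 * m12 * m20 + m02 * m10 * m21 - m02 * m11 * m20)⁻¹ * ((m00*m11 - m01*m10))) * d22)) * (m00*m11 - m10*m01) +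 b2 * ((d00*m11 - d10*m01) + (m00*d11 - m10*d01))) = 0 := by
  generalize hD : (m00 * m11 * m22 - m00 * m12 * m21 - m01 * m10 * m22 + m01 * m12 * m20 + m02 * m10 * m21 - m02 * m11 * m20) = D at hJ ⊢
  field_simp
  subst hD
  ring

private lemma aux_inv_mulVec_two (M : Matrix (Fin 3) (Fin 3) ℝ) (b : V3) (h : M.det ≠ 0) :
    (M⁻¹ *ᵥ b) 2 * M.det = b ⬝ᵥ (crossProduct (fun r => M r 0) (fun r => M r 1)) := by
  rw [Matrix.inv_def]
  simp only [Matrix.mulVec, dotProduct, Matrix.adjugate_fin_three, Ring.inverse_eq_inv',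
    Fin.sum_univ_three, cross_apply, Matrix.smul_apply, Matrix.of_apply, Matrix.cons_val',
    Matrix.cons_val_zero, Matrix.cons_val_one, Matrix.head_cons, Matrix.empty_val',
    Matrix.cons_val_fin_one, Matrix.head_fin_const, Matrix.cons_val_two, Matrix.tail_cons,
    smul_eq_mul]
  field_simp
  ring

private lemma aux_gronwall_zero {T : ℝ} (hT : 0 ≤ T) {f d : ℝ → V3} {K : ℝ}
    (hf : ∀ t ∈ Icc 0 T, HasDerivAt f (d t) t)
    (hb : ∀ t ∈ Icc 0 T, ‖d t‖ ≤ K * ‖f t‖)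
    (h0 : f 0 = 0) : f T = 0 := by
  have hcont : ContinuousOn f (Icc 0 T) := fun t ht =>
    ((hf t ht).continuousAt).continuousWithinAt
  have hmain := norm_le_gronwallBound_of_norm_deriv_right_le (δ := 0) (K := K) (ε := 0)
      (a := 0) (b := T) hcont
      (fun t ht => (hf t (Ico_subset_Icc_self ht)).hasDerivWithinAt)
      (by simp [h0]) (fun t ht => by simpa using hb t (Ico_subset_Icc_self ht))
  have h2 := hmain T (right_mem_Icc.mpr hT)
  have h3 : gronwallBound 0 K 0 (T - 0) = 0 := by unfold gronwallBound; split <;> simp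
  rw [h3] at h2
  exact norm_le_zero_iff.mp h2

private lemma aux_ode_zero {I : Set ℝ} (hIc : Set.OrdConnected I) (h0 : (0 : ℝ) ∈ I)
    {f : ℝ → V3} {W : ℝ → Matrix (Fin 3) (Fin 3) ℝ}
    (hf : ∀ t ∈ I, HasDerivAt f (W t *ᵥ f t) t)
    (hW : ∀ i j : Fin 3, ContinuousOn (fun t => W t i j) I)
    (h00 : f 0 = 0) : ∀ t ∈ I, f t = 0 := by
  have bound : ∀ a b : ℝ, Icc a b ⊆ I →
      ∃ K : ℝ, ∀ t ∈ Icc a b, ∀ v : V3, ‖W t *ᵥ v‖ ≤ K * ‖v‖ := by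
    intro a b hsub
    have hgc : ContinuousOn (fun t => ∑ i : Fin 3, ∑ j : Fin 3, |W t i j|) (Icc a b) := by
      apply continuousOn_finset_sum; intro i _
      apply continuousOn_finset_sum; intro j _
      exact ((hW i j).mono hsub).abs
    obtain ⟨K, hK⟩ := (isCompact_Icc).exists_bound_of_continuousOn hgc
    refine ⟨K, fun t ht v => ?_⟩
    have hKg : (∑ i : Fin 3, ∑ j : Fin 3, |W t i j|) ≤ K := by
      have := hK t ht
      rwa [Real.norm_eq_abs, abs_of_nonneg (by positivity)] at this
    have hK0 : (0 : ℝ) ≤ K := le_trans (by positivity) hKg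
    refine (pi_norm_le_iff_of_nonneg (by positivity)).mpr fun i => ?_
    have e1 : (W t *ᵥ v) i = ∑ j : Fin 3, W t i j * v j := by
      simp [Matrix.mulVec, dotProduct]
    rw [Real.norm_eq_abs, e1]
    calc |∑ j : Fin 3, W t i j * v j| ≤ ∑ j : Fin 3, |W t i j * v j| :=
          Finset.abs_sum_le_sum_abs _ _
      _ ≤ ∑ j : Fin 3, |W t i j| * ‖v‖ := by
          refine Finset.sum_le_sum fun j _ => ?_
          rw [abs_mul]
          exact mul_le_mul_of_nonneg_left (norm_le_pi_norm v j) (abs_nonneg _)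
      _ = (∑ j : Fin 3, |W t i j|) * ‖v‖ := (Finset.sum_mul _ _ _).symm
      _ ≤ (∑ i : Fin 3, ∑ j : Fin 3, |W t i j|) * ‖v‖ := by
          refine mul_le_mul_of_nonneg_right ?_ (norm_nonneg _)
          exact Finset.single_le_sum (f := fun i => ∑ j : Fin 3, |W t i j|)
            (fun i _ => by positivity) (Finset.mem_univ i)
      _ ≤ K * ‖v‖ := mul_le_mul_of_nonneg_right hKg (norm_nonneg _)
  intro t ht
  rcases le_or_gt 0 t with h | h
  · have hsub : Icc (0 : ℝ) t ⊆ I := hIc.out h0 ht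
    obtain ⟨K, hK⟩ := bound 0 t hsub
    exact aux_gronwall_zero h (fun s hs => hf s (hsub hs))
      (fun s hs => hK s hs (f s)) h00
  · have hsub : Icc t 0 ⊆ I := hIc.out ht h0
    obtain ⟨K, hK⟩ := bound t 0 hsub
    have hmem : ∀ s ∈ Icc (0 : ℝ) (-t), -s ∈ Icc t 0 := by
      intro s hs; exact ⟨by linarith [hs.2], by linarith [hs.1]⟩
    have hF : ∀ s ∈ Icc (0 : ℝ) (-t),
        HasDerivAt (fun s => f (-s)) (-(W (-s) *ᵥ f (-s))) s := by
      intro s hs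
      have := (hf (-s) (hsub (hmem s hs))).scomp s (hasDerivAt_neg s)
      exact this.congr_deriv (by simp)
    have hend := aux_gronwall_zero (by linarith) hF
      (fun s hs => by
        rw [norm_neg]
        exact hK (-s) (hmem s hs) (f (-s)))
      (by simpa using h00)
    simpa using hend
/-- cf. Proposition 2 of the paper. For a two-phase configuration across the
flat interface `Σ₀ = U ∩ {x₃ = 0}`, if on each side the Lagrangian equations
`∂ₜη = v`, `∂ₜp + γ p div_A v = 0`, `∂ₜb + b div_A v = (b·∇_A)v` hold, the jumps of `p, v, b`
vanish on `Σ₀` for all times, the jumps of `η, ∂₃η` vanish on `Σ₀` at `t = 0`, and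
`b⁺(0,·)·N⁺(0,·) ≠ 0` on `Σ₀`, then for every `t ∈ I` the jumps of `∂₃v`, `η` and `∂₃η`
vanish on `Σ₀`. -/
theorem contact_jump_propagation
    (γ : ℝ) (hγ : γ ≠ 0)
    (I : Set ℝ) (hI : IsOpen I) (hIc : I.OrdConnected) (h0I : (0 : ℝ) ∈ I)
    (U : Set V3) (hU : IsOpen U)
    (hSig : ({x ∈ U | x 2 = 0}).Nonempty)
    (ηp ηm vp vm bp bm : Pt → V3) (pp pm : Pt → ℝ)
    (hηp : ContDiffOn ℝ (⊤ : ℕ∞) ηp (I ×ˢ U)) (hηm : ContDiffOn ℝ (⊤ : ℕ∞) ηm (I ×ˢ U))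
    (hvp : ContDiffOn ℝ (⊤ : ℕ∞) vp (I ×ˢ U)) (hvm : ContDiffOn ℝ (⊤ : ℕ∞) vm (I ×ˢ U))
    (hbp : ContDiffOn ℝ (⊤ : ℕ∞) bp (I ×ˢ U)) (hbm : ContDiffOn ℝ (⊤ : ℕ∞) bm (I ×ˢ U))
    (hpp : ContDiffOn ℝ (⊤ : ℕ∞) pp (I ×ˢ U)) (hpm : ContDiffOn ℝ (⊤ : ℕ∞) pm (I ×ˢ U))
    (hJp : ∀ z ∈ I ×ˢ U, 0 < Jdet ηp z) (hJm : ∀ z ∈ I ×ˢ U, 0 < Jdet ηm z)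
    (hppos : ∀ z ∈ I ×ˢ U, 0 < pp z) (hpmos : ∀ z ∈ I ×ˢ U, 0 < pm z)
    -- (i) the equations on `I × U⁺` and `I × U⁻`
    (hflowp : ∀ z ∈ I ×ˢ {x ∈ U | 0 < x 2}, ∀ i : Fin 3, dt (fun w => ηp w i) z = vp z i)
    (hflowm : ∀ z ∈ I ×ˢ {x ∈ U | x 2 < 0}, ∀ i : Fin 3, dt (fun w => ηm w i) z = vm z i)
    (hpeqp : ∀ z ∈ I ×ˢ {x ∈ U | 0 < x 2}, dt pp z + γ * pp z * divA ηp vp z = 0)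
    (hpeqm : ∀ z ∈ I ×ˢ {x ∈ U | x 2 < 0}, dt pm z + γ * pm z * divA ηm vm z = 0)
    (hindp : ∀ z ∈ I ×ˢ {x ∈ U | 0 < x 2}, ∀ i : Fin 3,
      dt (fun w => bp w i) z + bp z i * divA ηp vp z
        = ∑ k, ∑ j, bp z k * Amat ηp z k j * dx j (fun w => vp w i) z)
    (hindm : ∀ z ∈ I ×ˢ {x ∈ U | x 2 < 0}, ∀ i : Fin 3,
      dt (fun w => bm w i) z + bm z i * divA ηm vm z
        = ∑ k, ∑ j, bm z k * Amat ηm z k j * dx j (fun w => vm w i) z)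
    -- (ii) the jump conditions on `Σ₀` for all `t ∈ I`
    (hjump : ∀ t ∈ I, ∀ x ∈ U, x 2 = 0 →
      pp (t, x) = pm (t, x) ∧ vp (t, x) = vm (t, x) ∧ bp (t, x) = bm (t, x))
    -- (iii) the initial jump conditions on `Σ₀`
    (hinit : ∀ x ∈ U, x 2 = 0 →
      ηp (0, x) = ηm (0, x) ∧
      ∀ i : Fin 3, dx 2 (fun w => ηp w i) (0, x) = dx 2 (fun w => ηm w i) (0, x))
    -- (iv) transversality of the initial magnetic field on `Σ₀`
    (htrans : ∀ x ∈ U, x 2 = 0 → bp (0, x) ⬝ᵥ Nvec ηp (0, x) ≠ 0) :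
    ∀ t ∈ I, ∀ x ∈ U, x 2 = 0 →
      (∀ i : Fin 3, dx 2 (fun w => vp w i) (t, x) = dx 2 (fun w => vm w i) (t, x)) ∧
      ηp (t, x) = ηm (t, x) ∧
      ∀ i : Fin 3, dx 2 (fun w => ηp w i) (t, x) = dx 2 (fun w => ηm w i) (t, x) := by
  intro t0 ht0 x hx hx2
  classical
  have hO : IsOpen (I ×ˢ U) := hI.prod hU
  have hconv : Convex ℝ I := convex_iff_ordConnected.mpr hIc
  have hmk : ∀ {t : ℝ} {y : V3}, t ∈ I → y ∈ U → ((t, y) : Pt) ∈ I ×ˢ U :=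
    fun ht hy => Set.mk_mem_prod ht hy
  have hcomp : ∀ {F : Pt → V3}, ContDiffOn ℝ (⊤ : ℕ∞) F (I ×ˢ U) →
      ∀ i : Fin 3, ContDiffOn ℝ (⊤ : ℕ∞) (fun w => F w i) (I ×ˢ U) := fun hF i =>
    (ContinuousLinearMap.proj (R := ℝ) (φ := fun _ : Fin 3 => ℝ) i).contDiff.comp_contDiffOn hF
  have hdetP : ∀ z ∈ I ×ˢ U, (jac ηp z).det ≠ 0 := fun z hz => ne_of_gt (hJp z hz)
  have hdetM : ∀ z ∈ I ×ˢ U, (jac ηm z).det ≠ 0 := fun z hz => ne_of_gt (hJm z hz)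
  -- continuity of the entries of `Amat`
  have hjacC : ∀ (η : Pt → V3), ContDiffOn ℝ (⊤ : ℕ∞) η (I ×ˢ U) →
      ContinuousOn (fun z : Pt => jac η z) (I ×ˢ U) := by
    intro η hη
    exact continuousOn_pi.mpr fun i => continuousOn_pi.mpr fun j =>
      aux_cont_deriv hO (hcomp hη i) _
  have hdetC : ∀ (η : Pt → V3), ContDiffOn ℝ (⊤ : ℕ∞) η (I ×ˢ U) →
      ContinuousOn (fun z : Pt => (jac η z).det) (I ×ˢ U) := fun η hη =>
    (continuous_id.matrix_det).comp_continuousOn (hjacC η hη)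
  have hinvC : ∀ (η : Pt → V3), ContDiffOn ℝ (⊤ : ℕ∞) η (I ×ˢ U) →
      (∀ z ∈ I ×ˢ U, (jac η z).det ≠ 0) → ∀ k j : Fin 3,
      ContinuousOn (fun z : Pt => (jac η z)⁻¹ k j) (I ×ˢ U) := by
    intro η hη hd k j
    have hadjC : ContinuousOn (fun z : Pt => (jac η z).adjugate) (I ×ˢ U) :=
      (continuous_id.matrix_adjugate).comp_continuousOn (hjacC η hη)
    have h1 : ContinuousOn (fun z : Pt => ((jac η z).det)⁻¹ * (jac η z).adjugate k j)
        (I ×ˢ U) :=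
      ((hdetC η hη).inv₀ hd).mul
        ((((continuous_apply j).comp (continuous_apply k) :
            Continuous fun M : Matrix (Fin 3) (Fin 3) ℝ => M k j)).comp_continuousOn hadjC)
    refine h1.congr fun z hz => ?_
    rw [Matrix.inv_def, Ring.inverse_eq_inv']
    simp [Matrix.smul_apply]
  have hAC : ∀ (η : Pt → V3), ContDiffOn ℝ (⊤ : ℕ∞) η (I ×ˢ U) →
      (∀ z ∈ I ×ˢ U, (jac η z).det ≠ 0) → ∀ i j : Fin 3,
      ContinuousOn (fun z : Pt => Amat η z i j) (I ×ˢ U) := by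
    intro η hη hd i j
    refine (hinvC η hη hd j i).congr fun z hz => ?_
    simp [Amat, Matrix.transpose_apply]
  have hdivC : ∀ (η v : Pt → V3), ContDiffOn ℝ (⊤ : ℕ∞) η (I ×ˢ U) → ContDiffOn ℝ (⊤ : ℕ∞) v (I ×ˢ U) →
      (∀ z ∈ I ×ˢ U, (jac η z).det ≠ 0) → ContinuousOn (divA η v) (I ×ˢ U) := by
    intro η v hη hv hd
    refine continuousOn_finset_sum _ fun i _ => continuousOn_finset_sum _ fun j _ => ?_
    exact (hAC η hη hd i j).mul (aux_cont_deriv hO (hcomp hv i) _)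
  -- the evolution equations extend to the interface by continuity
  have HA1p : ∀ z ∈ I ×ˢ U, z.2 2 = 0 → ∀ i : Fin 3, dt (fun w => ηp w i) z = vp z i := by
    intro z hz hz2 i
    have := aux_ext_plus (E := fun w => dt (fun y => ηp y i) w - vp w i) hO
      ((aux_cont_deriv hO (hcomp hηp i) ((1 : ℝ), (0 : V3))).sub
        ((continuous_apply i).comp_continuousOn hvp.continuousOn))
      hz hz2 (fun w hw hpos => sub_eq_zero.mpr (hflowp w ⟨hw.1, hw.2, hpos⟩ i))
    exact sub_eq_zero.mp this
  have HA1m : ∀ z ∈ I ×ˢ U, z.2 2 = 0 → ∀ i : Fin 3, dt (fun w => ηm w i) z = vm z i := by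
    intro z hz hz2 i
    have := aux_ext_minus (E := fun w => dt (fun y => ηm y i) w - vm w i) hO
      ((aux_cont_deriv hO (hcomp hηm i) ((1 : ℝ), (0 : V3))).sub
        ((continuous_apply i).comp_continuousOn hvm.continuousOn))
      hz hz2 (fun w hw hneg => sub_eq_zero.mpr (hflowm w ⟨hw.1, hw.2, hneg⟩ i))
    exact sub_eq_zero.mp this
  have HA2p : ∀ z ∈ I ×ˢ U, z.2 2 = 0 → dt pp z + γ * pp z * divA ηp vp z = 0 := by
    intro z hz hz2
    exact aux_ext_plus (E := fun w => dt pp w + γ * pp w * divA ηp vp w) hO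
      ((aux_cont_deriv hO hpp ((1 : ℝ), (0 : V3))).add
        ((continuousOn_const.mul hpp.continuousOn).mul (hdivC ηp vp hηp hvp hdetP)))
      hz hz2 (fun w hw hpos => hpeqp w ⟨hw.1, hw.2, hpos⟩)
  have HA2m : ∀ z ∈ I ×ˢ U, z.2 2 = 0 → dt pm z + γ * pm z * divA ηm vm z = 0 := by
    intro z hz hz2
    exact aux_ext_minus (E := fun w => dt pm w + γ * pm w * divA ηm vm w) hO
      ((aux_cont_deriv hO hpm ((1 : ℝ), (0 : V3))).add
        ((continuousOn_const.mul hpm.continuousOn).mul (hdivC ηm vm hηm hvm hdetM)))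
      hz hz2 (fun w hw hneg => hpeqm w ⟨hw.1, hw.2, hneg⟩)
  have HA3p : ∀ z ∈ I ×ˢ U, z.2 2 = 0 → ∀ i : Fin 3,
      dt (fun w => bp w i) z + bp z i * divA ηp vp z
        = ∑ k, ∑ j, bp z k * Amat ηp z k j * dx j (fun w => vp w i) z := by
    intro z hz hz2 i
    have := aux_ext_plus (E := fun w => dt (fun y => bp y i) w + bp w i * divA ηp vp w
        - ∑ k, ∑ j, bp w k * Amat ηp w k j * dx j (fun y => vp y i) w) hO
      (((aux_cont_deriv hO (hcomp hbp i) ((1 : ℝ), (0 : V3))).add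
        (((continuous_apply i).comp_continuousOn hbp.continuousOn).mul
          (hdivC ηp vp hηp hvp hdetP))).sub
        (continuousOn_finset_sum _ fun k _ => continuousOn_finset_sum _ fun j _ =>
          ((((continuous_apply k).comp_continuousOn hbp.continuousOn).mul
            (hAC ηp hηp hdetP k j)).mul (aux_cont_deriv hO (hcomp hvp i) _))))
      hz hz2 (fun w hw hpos => sub_eq_zero.mpr (hindp w ⟨hw.1, hw.2, hpos⟩ i))
    exact sub_eq_zero.mp this
  have HA3m : ∀ z ∈ I ×ˢ U, z.2 2 = 0 → ∀ i : Fin 3,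
      dt (fun w => bm w i) z + bm z i * divA ηm vm z
        = ∑ k, ∑ j, bm z k * Amat ηm z k j * dx j (fun w => vm w i) z := by
    intro z hz hz2 i
    have := aux_ext_minus (E := fun w => dt (fun y => bm y i) w + bm w i * divA ηm vm w
        - ∑ k, ∑ j, bm w k * Amat ηm w k j * dx j (fun y => vm y i) w) hO
      (((aux_cont_deriv hO (hcomp hbm i) ((1 : ℝ), (0 : V3))).add
        (((continuous_apply i).comp_continuousOn hbm.continuousOn).mul
          (hdivC ηm vm hηm hvm hdetM))).sub
        (continuousOn_finset_sum _ fun k _ => continuousOn_finset_sum _ fun j _ =>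
          ((((continuous_apply k).comp_continuousOn hbm.continuousOn).mul
            (hAC ηm hηm hdetM k j)).mul (aux_cont_deriv hO (hcomp hvm i) _))))
      hz hz2 (fun w hw hneg => sub_eq_zero.mpr (hindm w ⟨hw.1, hw.2, hneg⟩ i))
    exact sub_eq_zero.mp this
  -- path lemma
  have hpath : ∀ (z u : Pt), Filter.Tendsto (fun s : ℝ => z + s • u) (𝓝[>] 0) (𝓝 z) := by
    intro z u
    have hc : Continuous fun s : ℝ => z + s • u :=
      continuous_const.add (continuous_id.smul continuous_const)
    have := hc.tendsto 0
    simp only [zero_smul, add_zero] at this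
    exact this.mono_left nhdsWithin_le_nhds
  -- tangential derivatives of functions vanishing on the interface vanish
  have tang : ∀ F : Pt → ℝ, (∀ w ∈ I ×ˢ U, w.2 2 = 0 → F w = 0) → ∀ z ∈ I ×ˢ U, z.2 2 = 0 →
      ∀ u : Pt, u.2 2 = 0 → DifferentiableAt ℝ F z → fderiv ℝ F z u = 0 := by
    intro F hF z hz hz2 u hu hd
    refine aux_dir_deriv_zero hd u (hF z hz hz2) ?_
    filter_upwards [(hpath z u).eventually (hO.mem_nhds hz)] with s hs
    refine hF _ hs ?_
    show z.2 2 + s * u.2 2 = 0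
    rw [hz2, hu, mul_zero, add_zero]
  -- one-sided normal derivatives
  have nplus : ∀ E : Pt → ℝ, (∀ w ∈ I ×ˢ U, 0 < w.2 2 → E w = 0) → ∀ z ∈ I ×ˢ U, z.2 2 = 0 →
      E z = 0 → DifferentiableAt ℝ E z →
      fderiv ℝ E z ((0 : ℝ), Pi.single 2 1) = 0 := by
    intro E hE z hz hz2 h0 hd
    refine aux_dir_deriv_zero hd _ h0 ?_
    filter_upwards [(hpath z ((0 : ℝ), Pi.single 2 1)).eventually (hO.mem_nhds hz),
      self_mem_nhdsWithin] with s hs hs0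
    refine hE _ hs ?_
    have hval : (z + s • ((0 : ℝ), (Pi.single 2 1 : V3))).2 2 = z.2 2 + s * (1 : ℝ) := by
      simp [Pi.single_eq_same]
    rw [hval, hz2, zero_add, mul_one]
    exact hs0
  have nminus : ∀ E : Pt → ℝ, (∀ w ∈ I ×ˢ U, w.2 2 < 0 → E w = 0) → ∀ z ∈ I ×ˢ U, z.2 2 = 0 →
      E z = 0 → DifferentiableAt ℝ E z →
      fderiv ℝ E z ((0 : ℝ), Pi.single 2 1) = 0 := by
    intro E hE z hz hz2 h0 hd
    have h1 : fderiv ℝ E z ((0 : ℝ), -Pi.single 2 1) = 0 := by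
      refine aux_dir_deriv_zero hd _ h0 ?_
      filter_upwards [(hpath z ((0 : ℝ), -Pi.single 2 1)).eventually (hO.mem_nhds hz),
        self_mem_nhdsWithin] with s hs hs0
      refine hE _ hs ?_
      have hval : (z + s • ((0 : ℝ), (-Pi.single 2 1 : V3))).2 2 = z.2 2 + s * (-1 : ℝ) := by
        simp [Pi.single_eq_same]
      rw [hval, hz2, zero_add]
      have hs' : (0 : ℝ) < s := hs0
      linarith
    have h2 : ((0 : ℝ), (Pi.single 2 1 : V3)) = -((0 : ℝ), -Pi.single 2 1) := by
      rw [Prod.ext_iff]; constructor <;> simp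
    rw [h2, map_neg, h1, neg_zero]
  -- the jump of `η` vanishes on the interface for all times
  have HB : ∀ z ∈ I ×ˢ U, z.2 2 = 0 → ηp z = ηm z := by
    intro z hz hz2
    funext i
    have key : ∀ t ∈ I, HasDerivAt (fun s => ηp (s, z.2) i - ηm (s, z.2) i) 0 t := by
      intro t ht
      have hz' : ((t, z.2) : Pt) ∈ I ×ˢ U := hmk ht hz.2
      have h1 : HasDerivAt (fun s => ηp (s, z.2) i)
          (fderiv ℝ (fun w => ηp w i) (t, z.2) ((1 : ℝ), (0 : V3))) t :=
        aux_slice_t (aux_diffAt hO (hcomp hηp i) hz')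
      have h2 : HasDerivAt (fun s => ηm (s, z.2) i)
          (fderiv ℝ (fun w => ηm w i) (t, z.2) ((1 : ℝ), (0 : V3))) t :=
        aux_slice_t (aux_diffAt hO (hcomp hηm i) hz')
      have hv : fderiv ℝ (fun w => ηp w i) (t, z.2) ((1 : ℝ), (0 : V3))
          - fderiv ℝ (fun w => ηm w i) (t, z.2) ((1 : ℝ), (0 : V3)) = 0 := by
        have e1 : dt (fun w => ηp w i) (t, z.2) = vp (t, z.2) i := HA1p _ hz' hz2 i
        have e2 : dt (fun w => ηm w i) (t, z.2) = vm (t, z.2) i := HA1m _ hz' hz2 i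
        have e3 : vp (t, z.2) = vm (t, z.2) := (hjump t ht z.2 hz.2 hz2).2.1
        show dt (fun w => ηp w i) (t, z.2) - dt (fun w => ηm w i) (t, z.2) = 0
        rw [e1, e2, e3, sub_self]
      exact hv ▸ (h1.sub h2)
    have hconst := aux_const hI hconv key hz.1 h0I
    have h0' : ηp ((0 : ℝ), z.2) i - ηm ((0 : ℝ), z.2) i = 0 := by
      rw [congrFun (hinit z.2 hz.2 hz2).1 i, sub_self]
    have hz1 : ηp (z.1, z.2) i - ηm (z.1, z.2) i = 0 := by rw [hconst]; exact h0'
    have := sub_eq_zero.mp hz1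
    rwa [Prod.mk.eta] at this
  have hjumpz : ∀ z ∈ I ×ˢ U, z.2 2 = 0 → pp z = pm z ∧ vp z = vm z ∧ bp z = bm z := by
    intro z hz hz2
    have := hjump z.1 hz.1 z.2 hz.2 hz2
    rwa [Prod.mk.eta] at this
  -- equality of tangential/time derivatives of jumps
  have jumpd : ∀ (f g : Pt → ℝ), ContDiffOn ℝ (⊤ : ℕ∞) f (I ×ˢ U) → ContDiffOn ℝ (⊤ : ℕ∞) g (I ×ˢ U) →
      (∀ w ∈ I ×ˢ U, w.2 2 = 0 → f w = g w) → ∀ z ∈ I ×ˢ U, z.2 2 = 0 → ∀ u : Pt, u.2 2 = 0 →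
      fderiv ℝ f z u = fderiv ℝ g z u := by
    intro f g hf hg hfg z hz hz2 u hu
    have hdf := aux_diffAt hO hf hz
    have hdg := aux_diffAt hO hg hz
    have h0 := tang (fun w => f w - g w) (fun w hw hw2 => sub_eq_zero.mpr (hfg w hw hw2))
      z hz hz2 u hu (hdf.sub hdg)
    rw [fderiv_fun_sub hdf hdg] at h0
    rw [ContinuousLinearMap.sub_apply] at h0
    exact sub_eq_zero.mp h0
  -- the flow equations have vanishing spatial derivatives of their residual on the interface
  have hEp : ∀ z ∈ I ×ˢ U, z.2 2 = 0 → ∀ i j : Fin 3,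
      fderiv ℝ (fun w => dt (fun y => ηp y i) w - vp w i) z ((0 : ℝ), Pi.single j 1) = 0 := by
    intro z hz hz2 i j
    have hdiff : DifferentiableAt ℝ (fun w => dt (fun y => ηp y i) w - vp w i) z :=
      aux_diffAt hO ((aux_smooth_deriv hO (hcomp hηp i) ((1 : ℝ), (0 : V3))).sub
        (hcomp hvp i)) hz
    by_cases hj : j = (2 : Fin 3)
    · subst hj
      exact nplus _ (fun w hw hpos => sub_eq_zero.mpr (hflowp w ⟨hw.1, hw.2, hpos⟩ i)) z hz hz2
        (sub_eq_zero.mpr (HA1p z hz hz2 i)) hdiff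
    · refine tang _ (fun w hw hw2 => sub_eq_zero.mpr (HA1p w hw hw2 i)) z hz hz2
        ((0 : ℝ), (Pi.single j 1 : V3)) ?_ hdiff
      have h20 : (Pi.single j 1 : V3) 2 = 0 := by
        rw [Pi.single_apply, if_neg (fun h => hj h.symm)]
      exact h20
  have hEm : ∀ z ∈ I ×ˢ U, z.2 2 = 0 → ∀ i j : Fin 3,
      fderiv ℝ (fun w => dt (fun y => ηm y i) w - vm w i) z ((0 : ℝ), Pi.single j 1) = 0 := by
    intro z hz hz2 i j
    have hdiff : DifferentiableAt ℝ (fun w => dt (fun y => ηm y i) w - vm w i) z :=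
      aux_diffAt hO ((aux_smooth_deriv hO (hcomp hηm i) ((1 : ℝ), (0 : V3))).sub
        (hcomp hvm i)) hz
    by_cases hj : j = (2 : Fin 3)
    · subst hj
      exact nminus _ (fun w hw hneg => sub_eq_zero.mpr (hflowm w ⟨hw.1, hw.2, hneg⟩ i)) z hz hz2
        (sub_eq_zero.mpr (HA1m z hz hz2 i)) hdiff
    · refine tang _ (fun w hw hw2 => sub_eq_zero.mpr (HA1m w hw hw2 i)) z hz hz2
        ((0 : ℝ), (Pi.single j 1 : V3)) ?_ hdiff
      have h20 : (Pi.single j 1 : V3) 2 = 0 := by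
        rw [Pi.single_apply, if_neg (fun h => hj h.symm)]
      exact h20
  -- time derivatives of the Jacobian entries along the interface
  have hEgen : ∀ (η v : Pt → V3), ContDiffOn ℝ (⊤ : ℕ∞) η (I ×ˢ U) → ContDiffOn ℝ (⊤ : ℕ∞) v (I ×ˢ U) →
      (∀ z ∈ I ×ˢ U, z.2 2 = 0 → ∀ i j : Fin 3,
        fderiv ℝ (fun w => dt (fun y => η y i) w - v w i) z ((0 : ℝ), Pi.single j 1) = 0) →
      ∀ t ∈ I, ∀ i j : Fin 3,
        HasDerivAt (fun s => jac η (s, x) i j) (dx j (fun w => v w i) (t, x)) t := by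
    intro η v hη hv hE t ht i j
    have hzO : ((t, x) : Pt) ∈ I ×ˢ U := hmk ht hx
    have hgsm := aux_smooth_deriv hO (hcomp hη i) ((0 : ℝ), Pi.single j 1)
    have hgd : HasDerivAt (fun s => fderiv ℝ (fun w => η w i) (s, x) ((0 : ℝ), Pi.single j 1))
        (fderiv ℝ (fun z => fderiv ℝ (fun w => η w i) z ((0 : ℝ), Pi.single j 1)) (t, x)
          ((1 : ℝ), (0 : V3))) t :=
      aux_slice_t (aux_diffAt hO hgsm hzO)
    have hswap := aux_second_symm hO (hcomp hη i) hzO ((0 : ℝ), Pi.single j 1) ((1 : ℝ), (0 : V3))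
    have hEdiff : DifferentiableAt ℝ (fun w => dt (fun y => η y i) w - v w i) (t, x) :=
      aux_diffAt hO ((aux_smooth_deriv hO (hcomp hη i) ((1 : ℝ), (0 : V3))).sub (hcomp hv i)) hzO
    have hvdiff : DifferentiableAt ℝ (fun w => v w i) (t, x) := aux_diffAt hO (hcomp hv i) hzO
    have hfun : (fun y : Pt => fderiv ℝ (fun w => η w i) y ((1 : ℝ), (0 : V3)))
        = fun y => (dt (fun w => η w i) y - v y i) + v y i := by
      funext y
      show dt (fun w => η w i) y = dt (fun w => η w i) y - v y i + v y i
      rw [sub_add_cancel]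
    have hsplit : fderiv ℝ (fun y => fderiv ℝ (fun w => η w i) y ((1 : ℝ), (0 : V3))) (t, x)
        ((0 : ℝ), Pi.single j 1) = dx j (fun w => v w i) (t, x) := by
      rw [hfun, fderiv_fun_add hEdiff hvdiff, ContinuousLinearMap.add_apply,
        hE (t, x) hzO hx2 i j, zero_add]
      rfl
    have hval : fderiv ℝ (fun z => fderiv ℝ (fun w => η w i) z ((0 : ℝ), Pi.single j 1)) (t, x)
        ((1 : ℝ), (0 : V3)) = dx j (fun w => v w i) (t, x) := by
      rw [hswap]; exact hsplit
    rw [hval] at hgd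
    exact hgd
  have hderJp := hEgen ηp vp hηp hvp hEp
  have hderJm := hEgen ηm vm hηm hvm hEm
  -- conservation of b⁺ · N⁺ in time on the interface
  have hconsder : ∀ t ∈ I, HasDerivAt (fun s => bp (s, x) ⬝ᵥ Nvec ηp (s, x)) 0 t := by
    intro t ht
    have hzO : ((t, x) : Pt) ∈ I ×ˢ U := hmk ht hx
    have hb : ∀ i : Fin 3, HasDerivAt (fun s => bp (s, x) i) (dt (fun w => bp w i) (t, x)) t :=
      fun i => aux_slice_t (aux_diffAt hO (hcomp hbp i) hzO)
    have hm := hderJp t ht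
    have hfeq : (fun s => bp (s, x) ⬝ᵥ Nvec ηp (s, x)) = fun s =>
        bp (s, x) 0 * (jac ηp (s, x) 1 0 * jac ηp (s, x) 2 1 - jac ηp (s, x) 2 0 * jac ηp (s, x) 1 1)
      + bp (s, x) 1 * (jac ηp (s, x) 2 0 * jac ηp (s, x) 0 1 - jac ηp (s, x) 0 0 * jac ηp (s, x) 2 1)
      + bp (s, x) 2 * (jac ηp (s, x) 0 0 * jac ηp (s, x) 1 1 - jac ηp (s, x) 1 0 * jac ηp (s, x) 0 1) := by
      funext s
      simp only [Nvec, cross_apply, dotProduct, Fin.sum_univ_three,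
        Matrix.cons_val_zero, Matrix.cons_val_one, Matrix.head_cons, Matrix.cons_val_two,
        Matrix.tail_cons]
      try ring
    rw [hfeq]
    have hD := (((hb 0).mul (((hm 1 0).mul (hm 2 1)).sub ((hm 2 0).mul (hm 1 1)))).add
               ((hb 1).mul (((hm 2 0).mul (hm 0 1)).sub ((hm 0 0).mul (hm 2 1))))).add
               ((hb 2).mul (((hm 0 0).mul (hm 1 1)).sub ((hm 1 0).mul (hm 0 1))))
    refine hD.congr_deriv ?_
    simp only [Pi.mul_apply, Pi.sub_apply]
    have edb : ∀ i, dt (fun w => bp w i) (t, x)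
        = (∑ k, ∑ j, bp (t, x) k * Amat ηp (t, x) k j * dx j (fun w => vp w i) (t, x))
          - bp (t, x) i * divA ηp vp (t, x) :=
      fun i => eq_sub_of_add_eq (HA3p (t, x) hzO hx2 i)
    rw [edb 0, edb 1, edb 2]
    have hAv : ∀ k j : Fin 3, Amat ηp (t, x) k j
        = ((jac ηp (t, x)).det)⁻¹ * (jac ηp (t, x)).adjugate j k := by
      intro k j
      rw [show Amat ηp (t, x) = ((jac ηp (t, x))⁻¹)ᵀ from rfl, Matrix.inv_def,
        Ring.inverse_eq_inv']
      simp [Matrix.transpose_apply, Matrix.smul_apply]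
    have hJx := ne_of_gt (hJp (t, x) hzO)
    rw [show Jdet ηp (t, x) = (jac ηp (t, x)).det from rfl, Matrix.det_fin_three] at hJx
    simp only [divA, hAv, Fin.sum_univ_three, Matrix.adjugate_fin_three, Matrix.det_fin_three,
      Matrix.cons_val', Matrix.cons_val_zero, Matrix.cons_val_one, Matrix.head_cons,
      Matrix.empty_val', Matrix.cons_val_fin_one, Matrix.head_fin_const, Matrix.cons_val_two,
      Matrix.tail_cons, Matrix.of_apply]
    linear_combination conservation_key
      (jac ηp (t, x) 0 0) (jac ηp (t, x) 0 1) (jac ηp (t, x) 0 2)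
      (jac ηp (t, x) 1 0) (jac ηp (t, x) 1 1) (jac ηp (t, x) 1 2)
      (jac ηp (t, x) 2 0) (jac ηp (t, x) 2 1) (jac ηp (t, x) 2 2)
      (dx 0 (fun w => vp w 0) (t, x)) (dx 1 (fun w => vp w 0) (t, x)) (dx 2 (fun w => vp w 0) (t, x))
      (dx 0 (fun w => vp w 1) (t, x)) (dx 1 (fun w => vp w 1) (t, x)) (dx 2 (fun w => vp w 1) (t, x))
      (dx 0 (fun w => vp w 2) (t, x)) (dx 1 (fun w => vp w 2) (t, x)) (dx 2 (fun w => vp w 2) (t, x))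
      (bp (t, x) 0) (bp (t, x) 1) (bp (t, x) 2) hJx
  have hBne : ∀ t ∈ I, bp (t, x) ⬝ᵥ Nvec ηp (t, x) ≠ 0 := by
    intro t ht
    have := aux_const hI hconv hconsder ht h0I
    rw [this]
    exact htrans x hx hx2
  have mv3 : ∀ (M : Matrix (Fin 3) (Fin 3) ℝ) (v : V3) (r : Fin 3),
      (M *ᵥ v) r = M r 0 * v 0 + M r 1 * v 1 + M r 2 * v 2 := by
    intro M v r
    simp [Matrix.mulVec, dotProduct, Fin.sum_univ_three]
  have hR : ∀ t ∈ I,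
      (fun i => dx 2 (fun w => vp w i) (t, x) - dx 2 (fun w => vm w i) (t, x))
        = ((Matrix.of fun i j => dx j (fun w => vm w i) (t, x)) * (jac ηm (t, x))⁻¹) *ᵥ
          (fun i => dx 2 (fun w => ηp w i) (t, x) - dx 2 (fun w => ηm w i) (t, x)) := by
    intro t ht
    have hzO : ((t, x) : Pt) ∈ I ×ˢ U := hmk ht hx
    have hdp : (jac ηp (t, x)).det ≠ 0 := hdetP _ hzO
    have hdm : (jac ηm (t, x)).det ≠ 0 := hdetM _ hzO
    have hjaceq : ∀ (i j : Fin 3), j ≠ 2 → jac ηp (t, x) i j = jac ηm (t, x) i j := by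
      intro i j hj
      have h20 : (Pi.single j 1 : V3) 2 = 0 := by
        rw [Pi.single_apply, if_neg (fun h => hj h.symm)]
      exact jumpd (fun w => ηp w i) (fun w => ηm w i) (hcomp hηp i) (hcomp hηm i)
        (fun w hw hw2 => congrFun (HB w hw hw2) i) (t, x) hzO hx2
        ((0 : ℝ), (Pi.single j 1 : V3)) h20
    have hdxv : ∀ (i j : Fin 3), j ≠ 2 →
        dx j (fun w => vp w i) (t, x) = dx j (fun w => vm w i) (t, x) := by
      intro i j hj
      have h20 : (Pi.single j 1 : V3) 2 = 0 := by
        rw [Pi.single_apply, if_neg (fun h => hj h.symm)]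
      exact jumpd (fun w => vp w i) (fun w => vm w i) (hcomp hvp i) (hcomp hvm i)
        (fun w hw hw2 => congrFun (hjumpz w hw hw2).2.1 i) (t, x) hzO hx2
        ((0 : ℝ), (Pi.single j 1 : V3)) h20
    have hdtp : dt pp (t, x) = dt pm (t, x) :=
      jumpd pp pm hpp hpm (fun w hw hw2 => (hjumpz w hw hw2).1) (t, x) hzO hx2
        ((1 : ℝ), (0 : V3)) rfl
    have hbd : ∀ i : Fin 3, dt (fun w => bp w i) (t, x) = dt (fun w => bm w i) (t, x) := fun i =>
      jumpd _ _ (hcomp hbp i) (hcomp hbm i)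
        (fun w hw hw2 => congrFun (hjumpz w hw hw2).2.2 i) (t, x) hzO hx2 ((1 : ℝ), (0 : V3)) rfl
    have hpeq : pp (t, x) = pm (t, x) := (hjumpz (t, x) hzO hx2).1
    have hbeq : bp (t, x) = bm (t, x) := (hjumpz (t, x) hzO hx2).2.2
    have hPp := HA2p (t, x) hzO hx2
    have hPm := HA2m (t, x) hzO hx2
    rw [← hpeq] at hPm
    have hmulp : γ * pp (t, x) * divA ηp vp (t, x) = γ * pp (t, x) * divA ηm vm (t, x) := by
      linarith [hPp, hPm, hdtp]
    have hΦ := mul_left_cancel₀ (mul_ne_zero hγ (ne_of_gt (hppos (t, x) hzO))) hmulp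
    have hind0 : ∀ i : Fin 3,
        (∑ k, ∑ j, bp (t, x) k * Amat ηp (t, x) k j * dx j (fun w => vp w i) (t, x))
          = ∑ k, ∑ j, bp (t, x) k * Amat ηm (t, x) k j * dx j (fun w => vm w i) (t, x) := by
      intro i
      have ep := HA3p (t, x) hzO hx2 i
      have em := HA3m (t, x) hzO hx2 i
      rw [← hbeq, ← hΦ, ← hbd i] at em
      linarith [ep, em]
    have hsump : ∀ i : Fin 3,
        (∑ k, ∑ j, bp (t, x) k * Amat ηp (t, x) k j * dx j (fun w => vp w i) (t, x))
          = ∑ j, ((jac ηp (t, x))⁻¹ *ᵥ bp (t, x)) j * dx j (fun w => vp w i) (t, x) := by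
      intro i
      simp only [Matrix.mulVec, dotProduct, Amat, Matrix.transpose_apply, Fin.sum_univ_three]
      ring
    have hsumm : ∀ i : Fin 3,
        (∑ k, ∑ j, bp (t, x) k * Amat ηm (t, x) k j * dx j (fun w => vm w i) (t, x))
          = ∑ j, ((jac ηm (t, x))⁻¹ *ᵥ bp (t, x)) j * dx j (fun w => vm w i) (t, x) := by
      intro i
      simp only [Matrix.mulVec, dotProduct, Amat, Matrix.transpose_apply, Fin.sum_univ_three]
      ring
    have hinde : ∀ i : Fin 3,
        (∑ j, ((jac ηp (t, x))⁻¹ *ᵥ bp (t, x)) j * dx j (fun w => vp w i) (t, x))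
          = ∑ j, ((jac ηm (t, x))⁻¹ *ᵥ bp (t, x)) j * dx j (fun w => vm w i) (t, x) := by
      intro i
      rw [← hsump i, ← hsumm i]
      exact hind0 i
    have hMpcp : jac ηp (t, x) *ᵥ ((jac ηp (t, x))⁻¹ *ᵥ bp (t, x)) = bp (t, x) := by
      rw [Matrix.mulVec_mulVec, Matrix.mul_nonsing_inv _ (isUnit_iff_ne_zero.mpr hdp),
        Matrix.one_mulVec]
    have hMmcm : jac ηm (t, x) *ᵥ ((jac ηm (t, x))⁻¹ *ᵥ bp (t, x)) = bp (t, x) := by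
      rw [Matrix.mulVec_mulVec, Matrix.mul_nonsing_inv _ (isUnit_iff_ne_zero.mpr hdm),
        Matrix.one_mulVec]
    have hτrel : jac ηm (t, x) *ᵥ
        (((jac ηm (t, x))⁻¹ *ᵥ bp (t, x)) - ((jac ηp (t, x))⁻¹ *ᵥ bp (t, x)))
        = ((jac ηp (t, x))⁻¹ *ᵥ bp (t, x)) 2 •
          (fun i => dx 2 (fun w => ηp w i) (t, x) - dx 2 (fun w => ηm w i) (t, x)) := by
      rw [Matrix.mulVec_sub, hMmcm]
      funext i
      have e1 := congrFun hMpcp i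
      rw [mv3] at e1
      rw [hjaceq i 0 (by decide), hjaceq i 1 (by decide)] at e1
      rw [show jac ηp (t, x) i 2 = dx 2 (fun w => ηp w i) (t, x) from rfl] at e1
      simp only [Pi.sub_apply, Pi.smul_apply, smul_eq_mul]
      rw [mv3]
      rw [show jac ηm (t, x) i 2 = dx 2 (fun w => ηm w i) (t, x) from rfl]
      linear_combination -e1
    have h7 : ∀ j : Fin 3,
        ((jac ηm (t, x))⁻¹ *ᵥ bp (t, x)) j - ((jac ηp (t, x))⁻¹ *ᵥ bp (t, x)) j
          = ((jac ηp (t, x))⁻¹ *ᵥ bp (t, x)) 2 *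
            ((jac ηm (t, x))⁻¹ *ᵥ
              (fun i => dx 2 (fun w => ηp w i) (t, x) - dx 2 (fun w => ηm w i) (t, x))) j := by
      intro j
      have h4 := congrArg (fun v => (jac ηm (t, x))⁻¹ *ᵥ v) hτrel
      simp only [Matrix.mulVec_mulVec] at h4
      rw [Matrix.nonsing_inv_mul _ (isUnit_iff_ne_zero.mpr hdm), Matrix.one_mulVec,
        Matrix.mulVec_smul] at h4
      have := congrFun h4 j
      simpa using this
    have hcp2 : ((jac ηp (t, x))⁻¹ *ᵥ bp (t, x)) 2 ≠ 0 := by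
      intro h0
      have hkey := aux_inv_mulVec_two (jac ηp (t, x)) (bp (t, x)) hdp
      rw [h0, zero_mul] at hkey
      exact hBne t ht hkey.symm
    funext i
    show dx 2 (fun w => vp w i) (t, x) - dx 2 (fun w => vm w i) (t, x) = _
    rw [← Matrix.mulVec_mulVec, mv3]
    simp only [Matrix.of_apply]
    refine mul_left_cancel₀ hcp2 ?_
    have h6 := hinde i
    rw [Fin.sum_univ_three, Fin.sum_univ_three] at h6
    rw [hdxv i 0 (by decide), hdxv i 1 (by decide)] at h6
    linear_combination h6 + dx 0 (fun w => vm w i) (t, x) * h7 0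
      + dx 1 (fun w => vm w i) (t, x) * h7 1 + dx 2 (fun w => vm w i) (t, x) * h7 2
  have hτ0 : (fun i => dx 2 (fun w => ηp w i) ((0 : ℝ), x)
      - dx 2 (fun w => ηm w i) ((0 : ℝ), x)) = (0 : V3) :=
    funext fun i => sub_eq_zero.mpr ((hinit x hx hx2).2 i)
  have hτder : ∀ t ∈ I, HasDerivAt
      (fun s => (fun i => dx 2 (fun w => ηp w i) (s, x) - dx 2 (fun w => ηm w i) (s, x) : V3))
      (((Matrix.of fun i j => dx j (fun w => vm w i) (t, x)) * (jac ηm (t, x))⁻¹) *ᵥ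
        (fun i => dx 2 (fun w => ηp w i) (t, x) - dx 2 (fun w => ηm w i) (t, x))) t := by
    intro t ht
    rw [← hR t ht]
    refine hasDerivAt_pi.mpr fun i => ?_
    exact (hderJp t ht i 2).sub (hderJm t ht i 2)
  have hWcont : ∀ i j : Fin 3, ContinuousOn (fun s : ℝ =>
      ((Matrix.of fun i' j' => dx j' (fun w => vm w i') (s, x)) * (jac ηm (s, x))⁻¹) i j) I := by
    intro i j
    have hline : Continuous (fun s : ℝ => ((s, x) : Pt)) := continuous_id.prodMk continuous_const
    have hsum : ContinuousOn
        (fun z : Pt => ∑ k, dx k (fun w => vm w i) z * (jac ηm z)⁻¹ k j) (I ×ˢ U) :=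
      continuousOn_finset_sum _ fun k _ =>
        (aux_cont_deriv hO (hcomp hvm i) _).mul (hinvC ηm hηm hdetM k j)
    have hcmp := hsum.comp hline.continuousOn (fun s hs => hmk hs hx)
    refine hcmp.congr fun s hs => ?_
    simp [Matrix.mul_apply, Matrix.of_apply, Function.comp]
  have hτzero := aux_ode_zero hIc h0I
    (f := fun s => (fun i => dx 2 (fun w => ηp w i) (s, x) - dx 2 (fun w => ηm w i) (s, x) : V3))
    (W := fun s => (Matrix.of fun i' j' => dx j' (fun w => vm w i') (s, x)) * (jac ηm (s, x))⁻¹)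
    hτder hWcont hτ0
  refine ⟨fun i => ?_, HB (t0, x) (hmk ht0 hx) hx2, fun i => ?_⟩
  · have h1 := hR t0 ht0
    have h2 : (fun i => dx 2 (fun w => ηp w i) (t0, x) - dx 2 (fun w => ηm w i) (t0, x))
        = (0 : V3) := hτzero t0 ht0
    rw [h2, Matrix.mulVec_zero] at h1
    have := congrFun h1 i
    simpa [sub_eq_zero] using this
  · have := congrFun (hτzero t0 ht0) i
    simpa [sub_eq_zero] using this
end
end
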